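/- arXiv:1309.1134 — 13 statements merged into one kernel-verified Lean document; each statement's English description precedes it below -/
import Mathlib

section
/- Let n ≥ 3 and let G be an n-ary group with multiplication μₙ, and fix an element e ∈ G with querelement ē. Define the binary operation g ∗ h := μₙ[g, e, …, e, ē, h] (with n−3 copies of e followed by ē inserted between g and h). Then ⟨G, ∗⟩ is a group with identity element e, in which the inverse of g is g⁻¹ = μₙ[e, g, …, g, ḡ, e] (with n−3 copies of g followed by the querelement ḡ between the two e's). -/
/-- Total associativity of an `n`-ary operation `μ` given on lists: the composed
product of `2n-1` elements with one inner multiplication does not depend on the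
position of the inner multiplication. -/
def TotAssoc {G : Type*} (n : ℕ) (μ : List G → G) : Prop :=
  ∀ p₁ c₁ s₁ p₂ c₂ s₂ : List G,
    c₁.length = n → c₂.length = n →
    p₁.length + s₁.length = n - 1 → p₂.length + s₂.length = n - 1 →
    p₁ ++ c₁ ++ s₁ = p₂ ++ c₂ ++ s₂ →
    μ (p₁ ++ μ c₁ :: s₁) = μ (p₂ ++ μ c₂ :: s₂)

/-- Unique solvability of an `n`-ary operation in each place `i = 0,…,n-1`. -/
def UniqSolv {G : Type*} (n : ℕ) (μ : List G → G) : Prop :=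
  ∀ (u : List G) (g : G), u.length = n - 1 →
    ∀ i ≤ n - 1, ∃! h : G, μ (u.take i ++ h :: u.drop i) = g

/-! Unique solvability makes `μ` cancellative in every place, and with total associativity
this gives Dörnte's identity `μ[gᵃ, ḡ, gᵇ] = g` for `a + b = n - 1`; hence a word `gᵃ ḡ gᵇ` of
length `n - 1` acts neutrally from either side. For the retract `g ∗ₑ h = μ[g, eⁿ⁻³, ē, h]`
taken at any base point `e`, total associativity gives the mixed law
`g ∗ₑ (h ∗_f u) = (g ∗ₑ h) ∗_f u`, and neutrality gives `e ∗ₑ g = g = g ∗ₑ e`. The proposed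
inverse `μ[e, gⁿ⁻³, ḡ, e]` is `e ∗_g e`, so the mixed law reduces both inverse laws to the
neutrality of the base point. -/

section NaryGroup

variable {G : Type*} {n : ℕ} {μ : List G → G}

theorem UniqSolv.cancel (hsolv : UniqSolv n μ) {p s : List G} {x y : G}
    (hlen : p.length + s.length + 1 = n) (h : μ (p ++ x :: s) = μ (p ++ y :: s)) : x = y := by
  obtain ⟨z, -, hz⟩ := hsolv (p ++ s) (μ (p ++ y :: s)) (by simp; omega) p.length (by omega)
  simp only [List.take_left' rfl, List.drop_left' rfl] at hz
  exact (hz x h).trans (hz y rfl).symm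

theorem TotAssoc.apply_replicate_bar_replicate (hassoc : TotAssoc n μ) (hsolv : UniqSolv n μ)
    {bar : G → G} (hbar : ∀ g, μ (List.replicate (n - 1) g ++ [bar g]) = g) (g : G) {a b : ℕ}
    (hab : a + b + 1 = n) : μ (List.replicate a g ++ bar g :: List.replicate b g) = g := by
  have hrep : List.replicate (n - 1) g = List.replicate b g ++ List.replicate a g := by
    rw [List.replicate_append_replicate]; congr 1; omega
  refine hsolv.cancel (p := List.replicate b g) (s := List.replicate a g) (by simp; omega) ?_
  calc μ (List.replicate b g ++ μ (List.replicate a g ++ bar g :: List.replicate b g) ::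
        List.replicate a g)
      = μ ([] ++ μ (List.replicate (n - 1) g ++ [bar g]) :: List.replicate (n - 1) g) :=
        hassoc _ _ _ _ _ _ (by simp; omega) (by simp; omega) (by simp; omega) (by simp)
          (by rw [hrep]; simp only [List.append_assoc, List.cons_append, List.nil_append])
    _ = μ (List.replicate b g ++ g :: List.replicate a g) := by
        rw [hbar, List.nil_append, ← List.replicate_succ, ← List.singleton_append,
          ← List.append_assoc, ← List.replicate_succ', List.replicate_append_replicate]
        congr 2; omega

theorem TotAssoc.apply_cons_eq_self_of_apply_append_eq (hassoc : TotAssoc n μ)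
    (hsolv : UniqSolv n μ) (hn : 2 ≤ n) {w : List G} (hw : w.length + 1 = n) {g : G}
    (hg : μ (w ++ [g]) = g) (x : G) : μ (x :: w) = x := by
  obtain ⟨k, rfl⟩ := Nat.exists_eq_add_of_le' hn
  refine hsolv.cancel (p := []) (s := g :: List.replicate k g) (by simp) ?_
  calc μ ([] ++ μ (x :: w) :: g :: List.replicate k g)
      = μ ([x] ++ μ (w ++ [g]) :: List.replicate k g) :=
        hassoc _ _ _ _ _ _ (by simp; omega) (by simp; omega) (by simp) (by simp; omega) (by simp)
    _ = μ ([] ++ x :: g :: List.replicate k g) := by rw [hg]; rfl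

theorem TotAssoc.apply_append_eq_self_of_apply_cons_eq (hassoc : TotAssoc n μ)
    (hsolv : UniqSolv n μ) (hn : 2 ≤ n) {w : List G} (hw : w.length + 1 = n) {g : G}
    (hg : μ (g :: w) = g) (x : G) : μ (w ++ [x]) = x := by
  obtain ⟨k, rfl⟩ := Nat.exists_eq_add_of_le' hn
  refine hsolv.cancel (p := List.replicate k g ++ [g]) (s := []) (by simp) ?_
  calc μ ((List.replicate k g ++ [g]) ++ μ (w ++ [x]) :: [])
      = μ (List.replicate k g ++ μ (g :: w) :: [x]) :=
        hassoc _ _ _ _ _ _ (by simp; omega) (by simp; omega) (by simp) (by simp) (by simp)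
    _ = μ ((List.replicate k g ++ [g]) ++ x :: []) := by rw [hg]; simp

def retract (n : ℕ) (μ : List G → G) (bar : G → G) (e g h : G) : G :=
  μ (g :: (List.replicate (n - 3) e ++ [bar e, h]))

theorem TotAssoc.retract_retract (hassoc : TotAssoc n μ) (hn : 3 ≤ n) {bar : G → G}
    (e f g h u : G) :
    retract n μ bar e g (retract n μ bar f h u) = retract n μ bar f (retract n μ bar e g h) u := by
  obtain ⟨m, rfl⟩ := Nat.exists_eq_add_of_le' hn
  simpa [retract] using hassoc (g :: (List.replicate m e ++ [bar e])) _ [] [] _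
    (List.replicate m f ++ [bar f, u]) (by simp) (by simp) (by simp) (by simp) (by simp)

theorem TotAssoc.retract_self_left (hassoc : TotAssoc n μ) (hsolv : UniqSolv n μ) (hn : 3 ≤ n)
    {bar : G → G} (hbar : ∀ g, μ (List.replicate (n - 1) g ++ [bar g]) = g) (e g : G) :
    retract n μ bar e e g = g := by
  obtain ⟨m, rfl⟩ := Nat.exists_eq_add_of_le' hn
  simpa [retract, List.replicate_succ] using
    hassoc.apply_append_eq_self_of_apply_cons_eq hsolv (by omega)
      (w := List.replicate (m + 1) e ++ [bar e]) (by simp) (hbar e) g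

theorem TotAssoc.retract_self_right (hassoc : TotAssoc n μ) (hsolv : UniqSolv n μ) (hn : 3 ≤ n)
    {bar : G → G} (hbar : ∀ g, μ (List.replicate (n - 1) g ++ [bar g]) = g) (e g : G) :
    retract n μ bar e g e = g := by
  obtain ⟨m, rfl⟩ := Nat.exists_eq_add_of_le' hn
  have hdoernte : μ (List.replicate m e ++ [bar e, e] ++ [e]) = e := by
    simpa using hassoc.apply_replicate_bar_replicate hsolv hbar e (a := m) (b := 2) (by omega)
  simpa [retract] using
    hassoc.apply_cons_eq_self_of_apply_append_eq hsolv (by omega) (by simp) hdoernte g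

end NaryGroup

/-- On an `n`-ary group (`n ≥ 3`) with querelement map `bar`,
for any fixed `e`, the binary operation `g ∗ h = μₙ[g, e^{n-3}, ē, h]` makes `G`
a group with identity `e`, in which the inverse of `g` is
`μₙ[e, g^{n-3}, ḡ, e]`. -/
theorem statement0 {G : Type*} (n : ℕ) (hn : 3 ≤ n)
    (μ : List G → G) (hassoc : TotAssoc n μ) (hsolv : UniqSolv n μ)
    (bar : G → G)
    (hbar : ∀ g : G, μ (List.replicate (n - 1) g ++ [bar g]) = g)
    (e : G)
    (st : G → G → G)
    (hst : ∀ g h : G, st g h = μ (g :: (List.replicate (n - 3) e ++ [bar e, h])))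
    (inv : G → G)
    (hinv : ∀ g : G, inv g = μ (e :: (List.replicate (n - 3) g ++ [bar g, e]))) :
    (∀ g h u : G, st (st g h) u = st g (st h u)) ∧
    (∀ g : G, st e g = g ∧ st g e = g) ∧
    (∀ g : G, st g (inv g) = e ∧ st (inv g) g = e) := by
  obtain rfl : st = retract n μ bar e := funext fun g => funext (hst g)
  obtain rfl : inv = fun g => retract n μ bar g e e := funext hinv
  have left_id := hassoc.retract_self_left hsolv hn hbar
  have right_id := hassoc.retract_self_right hsolv hn hbar
  refine ⟨fun g h u => (hassoc.retract_retract hn e e g h u).symm,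
    fun g => ⟨left_id e g, right_id e g⟩, fun g => ⟨?_, ?_⟩⟩
  · rw [hassoc.retract_retract hn, right_id, left_id]
  · rw [← hassoc.retract_retract hn, left_id, right_id]
end

section
/- Let G be a ternary group with multiplication μ₃ and fix e ∈ G with querelement ē. Define the binary group operation g ∗ h := μ₃[g, ē, h] (with identity e) and the map φ(g) := μ₃[e, g, ē]. Then φ is an automorphism of the binary group ⟨G, ∗, e⟩: φ(g ∗ h) = φ(g) ∗ φ(h) for all g, h ∈ G, and φ(e) = e. -/
/-- In a ternary group with distinguished element `e` and
querelement `ē`, the map `φ(g) = μ₃[e, g, ē]` is an automorphism of the binary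
group `⟨G, ∗, e⟩`, where `g ∗ h = μ₃[g, ē, h]`. -/
theorem statement1 {G : Type*}
    (μ : G → G → G → G)
    (hassoc : ∀ g h u v w : G,
      μ (μ g h u) v w = μ g (μ h u v) w ∧ μ g (μ h u v) w = μ g h (μ u v w))
    (hsolv1 : ∀ a b g : G, ∃! h : G, μ h a b = g)
    (hsolv2 : ∀ a b g : G, ∃! h : G, μ a h b = g)
    (hsolv3 : ∀ a b g : G, ∃! h : G, μ a b h = g)
    (e ebar : G) (hebar : μ e e ebar = e)
    (st : G → G → G) (hst : ∀ g h : G, st g h = μ g ebar h)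
    (φ : G → G) (hφ : ∀ g : G, φ g = μ e g ebar) :
    Function.Bijective φ ∧ (∀ g h : G, φ (st g h) = st (φ g) (φ h)) ∧ φ e = e := by
  have cancel3 : ∀ a b x y : G, μ a b x = μ a b y → x = y := by
    intro a b x y hxy
    obtain ⟨h, _, hu⟩ := hsolv3 a b (μ a b y)
    exact (hu x hxy).trans (hu y rfl).symm
  have lneut : ∀ g : G, μ ebar e g = g := by
    intro g
    apply cancel3 e e
    have h1 := (hassoc e e ebar e g).1.trans (hassoc e e ebar e g).2
    rw [hebar] at h1
    exact h1.symm
  refine ⟨⟨?_, ?_⟩, ?_, by rw [hφ, hebar]⟩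
  · intro x y hxy
    rw [hφ, hφ] at hxy
    obtain ⟨h, _, hu⟩ := hsolv2 e ebar (μ e y ebar)
    exact (hu x hxy).trans (hu y rfl).symm
  · intro g
    obtain ⟨h, hh, _⟩ := hsolv2 e ebar g
    exact ⟨h, (hφ h).trans hh⟩
  · intro g h
    rw [hφ, hφ, hφ, hst, hst]
    have h1 := (hassoc e g ebar ebar (μ e h ebar)).1.trans
      (hassoc e g ebar ebar (μ e h ebar)).2
    have h3 : μ ebar ebar (μ e h ebar) = μ ebar h ebar := by
      have h2 := (hassoc ebar ebar e h ebar).2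
      rw [lneut h] at h2
      exact h2.symm
    have h4 := (hassoc e g ebar h ebar).2
    rw [h4, h1, h3]
end

section
/- Let G be a ternary group with multiplication μ₃, fix e ∈ G with querelement ē, let g ∗ h := μ₃[g, ē, h] be the associated binary group with identity e, and let φ(g) := μ₃[e, g, ē]. Then the inverse of the first polyadic power e⟨1⟩ = μ₃[e,e,e] in the binary group is (e⟨1⟩)⁻¹ = ē, and for every k ≥ 0 the even powers of φ are inner: φ^{2k}(g) = e⟨k⟩ ∗ g ∗ (e⟨k⟩)⁻¹ for all g ∈ G. -/
/-- In a ternary group with distinguished element `e` and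
querelement `ē`, with binary product `g ∗ h = μ₃[g, ē, h]` (identity `e`) and
`φ(g) = μ₃[e, g, ē]`: the inverse of `e⟨1⟩ = μ₃[e,e,e]` in the binary group is
`ē`, and the even powers of `φ` are inner: `φ^{2k}(g) = e⟨k⟩ ∗ g ∗ (e⟨k⟩)⁻¹`. -/
theorem statement4 {G : Type*}
    (μ : G → G → G → G)
    (hassoc : ∀ g h u v w : G,
      μ (μ g h u) v w = μ g (μ h u v) w ∧ μ g (μ h u v) w = μ g h (μ u v w))
    (hsolv1 : ∀ a b g : G, ∃! h : G, μ h a b = g)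
    (hsolv2 : ∀ a b g : G, ∃! h : G, μ a h b = g)
    (hsolv3 : ∀ a b g : G, ∃! h : G, μ a b h = g)
    (e ebar : G) (hebar : μ e e ebar = e)
    (st : G → G → G) (hst : ∀ g h : G, st g h = μ g ebar h)
    (φ : G → G) (hφ : ∀ g : G, φ g = μ e g ebar)
    (pow : ℕ → G) (hpow0 : pow 0 = e)
    (hpowS : ∀ k : ℕ, pow (k + 1) = μ e e (pow k)) :
    (st (pow 1) ebar = e ∧ st ebar (pow 1) = e) ∧
    (∀ (k : ℕ) (g w : G), st (pow k) w = e → st w (pow k) = e →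
      φ^[2 * k] g = st (st (pow k) g) w) := by
  have A1 : ∀ g h u v w : G, μ (μ g h u) v w = μ g (μ h u v) w :=
    fun g h u v w => (hassoc g h u v w).1
  have A2 : ∀ g h u v w : G, μ g (μ h u v) w = μ g h (μ u v w) :=
    fun g h u v w => (hassoc g h u v w).2
  -- left identity law
  have h1 : ∀ g : G, μ e ebar g = g := by
    intro g
    have key : μ e (μ e ebar g) e = μ e g e := by
      have t := A1 e e ebar g e
      rw [hebar] at t
      exact t.symm
    exact (hsolv2 e e (μ e g e)).unique key rfl
  -- right identity law
  have h2 : ∀ g : G, μ g ebar e = g := by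
    intro g
    obtain ⟨h, hh, -⟩ := hsolv1 e e g
    have key : μ (μ h e e) ebar e = μ h e e := by
      have t := A1 h e e ebar e
      rw [hebar] at t
      exact t
    rw [← hh]; exact key
  have h3 : μ ebar e e = e := by
    have key : μ e e (μ ebar e e) = μ e e e := by
      have t1 := A1 e e ebar e e
      have t2 := A2 e e ebar e e
      rw [hebar] at t1
      exact (t1.trans t2).symm
    exact (hsolv3 e e (μ e e e)).unique key rfl
  have hp1 : pow 1 = μ e e e := by rw [hpowS 0, hpow0]
  have part1a : st (pow 1) ebar = e := by
    rw [hst, hp1, A1 e e e ebar ebar, hebar, hebar]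
  have part1b : st ebar (pow 1) = e := by
    rw [hst, hp1, ← A2 ebar ebar e e e, h3, h3]
  refine ⟨⟨part1a, part1b⟩, ?_⟩
  -- group structure from `st`
  letI : One G := ⟨e⟩
  letI : Mul G := ⟨st⟩
  letI : Inv G := ⟨fun a => (hsolv1 ebar a e).choose⟩
  have stA : ∀ a b c : G, a * b * c = a * (b * c) := by
    intro a b c
    show st (st a b) c = st a (st b c)
    rw [hst, hst, hst, hst, A1 a ebar b ebar c, A2 a ebar b ebar c]
  have stL : ∀ a : G, 1 * a = a := by
    intro a
    show st e a = a
    rw [hst]; exact h1 a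
  have stI : ∀ a : G, a⁻¹ * a = 1 := by
    intro a
    show st ((hsolv1 ebar a e).choose) a = e
    rw [hst]
    exact (hsolv1 ebar a e).choose_spec.1
  letI grp : Group G := Group.ofLeftAxioms stA stL stI
  have hmul : ∀ a b : G, st a b = a * b := fun _ _ => rfl
  have hone : e = (1 : G) := rfl
  -- ebar is the inverse of pow 1
  have hebar_inv : ebar = (pow 1)⁻¹ := by
    refine eq_inv_of_mul_eq_one_right ?_
    rw [← hmul, part1a, hone]
  -- μ e e x = pow 1 * x
  have hEE : ∀ x : G, μ e e x = pow 1 * x := by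
    intro x
    rw [← hmul, hst, hp1, A1 e e e ebar x, hebar]
  have hpowk : ∀ k, pow k = (pow 1) ^ k := by
    intro k
    induction k with
    | zero => rw [hpow0, pow_zero]; exact hone
    | succ k ih => rw [hpowS k, hEE, ih, ← pow_succ']
  have hphi2 : ∀ g : G, φ (φ g) = pow 1 * g * (pow 1)⁻¹ := by
    intro g
    rw [hφ, hφ, ← A1 e e g ebar ebar, hEE, ← hst, hmul, hebar_inv]
  have main : ∀ k (g : G), φ^[2 * k] g = (pow 1) ^ k * g * ((pow 1) ^ k)⁻¹ := by
    intro k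
    induction k with
    | zero => intro g; simp
    | succ k ih =>
      intro g
      have h2k : 2 * (k + 1) = 2 + 2 * k := by ring
      rw [h2k, Function.iterate_add_apply, ih]
      show φ (φ^[1] _) = _
      rw [Function.iterate_one, hphi2]
      group
  intro k g w hw1 hw2
  have hw1' : (pow 1) ^ k * w = 1 := by
    rw [← hpowk, ← hmul, hw1, hone]
  have hw : w = ((pow 1) ^ k)⁻¹ := eq_inv_of_mul_eq_one_right hw1'
  have hr : st (st (pow k) g) w = (pow 1) ^ k * g * ((pow 1) ^ k)⁻¹ := by
    rw [hmul, hmul, hpowk, hw]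
  rw [main k g, hr]
end

section
/- (Hosszú–Gluskin theorem.) Let n ≥ 3 and let G be an n-ary group with multiplication μₙ. Fix e ∈ G with querelement ē, let g ∗ h := μₙ[g, e^{n−3}, ē, h] be the associated binary group operation with identity e, and define φ(g) := μₙ[e, g, e^{n−3}, ē]. Then φ is an automorphism of ⟨G, ∗, e⟩, the first polyadic power e⟨1⟩ := μₙ[e, …, e] (n copies) is a fixed point of φ (φ(e⟨1⟩) = e⟨1⟩), the (n−1)-st power of φ is conjugation by e⟨1⟩ (φ^{n−1}(g) = e⟨1⟩ ∗ g ∗ (e⟨1⟩)⁻¹ for all g), and the chain formula holds: μₙ[g₁, …, gₙ] = g₁ ∗ φ(g₂) ∗ φ²(g₃) ∗ ⋯ ∗ φ^{n−1}(gₙ) ∗ e⟨1⟩ for all g₁,…,gₙ ∈ G. -/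
/-!
Total associativity yields general associativity for the long products `lprod` of `k(n-1)+1`
letters, so every nested product below can be flattened to a single word. In such words the
block `(e^{n-3} ē)^k e^k` can be deleted wherever it occurs, because `e^{n-3} ē e` is
right-neutral (a consequence of `ē` being the querelement of `e` in every place). Now
`φ^k(g)` flattens to `e^k g (e^{n-3} ē)^k`, and `g₀ ∗ φ(g₁) ∗ ⋯ ∗ φ^i(gᵢ)` to
`g₀ g₁ ⋯ gᵢ (e^{n-3} ē)^i`; multiplying by `e⟨1⟩ = μ[eⁿ]` appends `e^{n-3} ē eⁿ`, after which
the block `(e^{n-3} ē)^n eⁿ` is deleted and `μ[g₀, …, g_{n-1}]` is left. In particular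
`φ^{n-1}(g) ∗ e⟨1⟩ = μ[e^{n-1}, g] = e⟨1⟩ ∗ g`, which gives the conjugation formula.
-/

namespace NaryGroup

/-- The long product of `x :: w`, computed by repeatedly multiplying the leftmost `n` letters.
It is meaningful only when `n - 1 ∣ w.length`; a shorter leftover tail is discarded. -/
def lprod {G : Type*} (n : ℕ) (μ : List G → G) (x : G) (w : List G) : G :=
  if 2 ≤ n ∧ n - 1 ≤ w.length then lprod n μ (μ (x :: w.take (n - 1))) (w.drop (n - 1)) else x
termination_by w.length
decreasing_by simp only [List.length_drop]; omega

variable {G : Type*} {n : ℕ} {μ : List G → G} {e ebar : G}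

@[simp]
theorem lprod_nil (x : G) : lprod n μ x [] = x := by
  rw [lprod, if_neg (by simp only [List.length_nil]; omega)]

theorem lprod_append_of_length (hn : 2 ≤ n) {b : List G} (hb : b.length = n - 1) (x : G)
    (s : List G) : lprod n μ x (b ++ s) = lprod n μ (μ (x :: b)) s := by
  rw [lprod, if_pos ⟨hn, by simp only [List.length_append]; omega⟩, List.take_left' hb,
    List.drop_left' hb]

theorem lprod_of_length (hn : 2 ≤ n) {w : List G} (hw : w.length = n - 1) (x : G) :
    lprod n μ x w = μ (x :: w) := by
  simpa using lprod_append_of_length (μ := μ) hn hw x []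

theorem lprod_append (hn : 2 ≤ n) {c : List G} (hc : n - 1 ∣ c.length) (x : G) (s : List G) :
    lprod n μ x (c ++ s) = lprod n μ (lprod n μ x c) s := by
  obtain ⟨k, hk⟩ := hc
  induction k generalizing x c with
  | zero => simp_all
  | succ k ih =>
    rw [Nat.mul_succ] at hk
    have hb : (c.take (n - 1)).length = n - 1 := by simp; omega
    rw [← List.take_append_drop (n - 1) c, List.append_assoc, lprod_append_of_length hn hb,
      lprod_append_of_length hn hb, ih _ (by simp; omega)]

theorem lprod_mu (hn : 2 ≤ n) (hassoc : TotAssoc n μ) {c : List G} (hc : c.length = n - 1)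
    (y : G) (p s : List G) (hps : n - 1 ∣ p.length + s.length + 1) (x : G) :
    lprod n μ x (p ++ μ (y :: c) :: s) = lprod n μ x (p ++ y :: (c ++ s)) := by
  induction hp : p.length using Nat.strong_induction_on generalizing p x with
  | _ l ih =>
    by_cases hlong : n - 1 ≤ l
    · have hb : (p.take (n - 1)).length = n - 1 := by simp; omega
      rw [← List.take_append_drop (n - 1) p, List.append_assoc, List.append_assoc,
        lprod_append_of_length hn hb, lprod_append_of_length hn hb,
        ih (l - (n - 1)) (by omega) _ ?_ _ (by simp; omega)]
      have := Nat.dvd_sub hps (dvd_refl (n - 1))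
      rwa [show p.length + s.length + 1 - (n - 1) = (p.drop (n - 1)).length + s.length + 1 by
        simp; omega] at this
    · have hs : n - 2 - l ≤ s.length := by
        obtain ⟨k, hk⟩ := hps
        rcases k with _ | k
        · omega
        · rw [Nat.mul_succ] at hk; omega
      set s₀ := s.take (n - 2 - l)
      set s₁ := s.drop (n - 2 - l)
      set w := p ++ y :: (c ++ s₀)
      have hw : w.length = 2 * (n - 1) := by simp [w, s₀]; omega
      have hA : (w.take (n - 1)).length = n - 1 := by simp; omega
      have hB : (w.drop (n - 1)).length = n - 1 := by simp; omega
      have hassoc' :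
          μ (x :: (p ++ μ (y :: c) :: s₀)) = μ (μ (x :: w.take (n - 1)) :: w.drop (n - 1)) :=
        hassoc (x :: p) (y :: c) s₀ [] (x :: w.take (n - 1)) (w.drop (n - 1))
          (by simp; omega) (by simp; omega) (by simp [s₀]; omega) (by simp; omega)
          (by simp [w])
      calc lprod n μ x (p ++ μ (y :: c) :: s)
          = lprod n μ x ((p ++ μ (y :: c) :: s₀) ++ s₁) := by simp [s₀, s₁]
        _ = lprod n μ x (w.take (n - 1) ++ w.drop (n - 1) ++ s₁) := by
          rw [lprod_append_of_length hn (by simp [s₀]; omega), List.append_assoc,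
            lprod_append_of_length hn hA, lprod_append_of_length hn hB, hassoc']
        _ = lprod n μ x (p ++ y :: (c ++ s)) := by simp [w, s₀, s₁]

theorem lprod_lprod (hn : 2 ≤ n) (hassoc : TotAssoc n μ) {c : List G} (hc : n - 1 ∣ c.length)
    (y : G) (p s : List G) (hps : n - 1 ∣ p.length + s.length + 1) (x : G) :
    lprod n μ x (p ++ lprod n μ y c :: s) = lprod n μ x (p ++ y :: (c ++ s)) := by
  obtain ⟨k, hk⟩ := hc
  induction k generalizing y c with
  | zero => simp_all
  | succ k ih =>
    rw [Nat.mul_succ] at hk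
    have hb : (c.take (n - 1)).length = n - 1 := by simp; omega
    have hc' : (c.drop (n - 1)).length = (n - 1) * k := by simp; omega
    have hps' : n - 1 ∣ p.length + (c.drop (n - 1) ++ s).length + 1 := by
      rw [List.length_append, hc', add_comm _ s.length, ← add_assoc, add_right_comm]
      exact dvd_add hps (dvd_mul_right _ _)
    rw [← List.take_append_drop (n - 1) c, lprod_append_of_length hn hb, ih _ hc',
      lprod_mu hn hassoc hb _ _ _ hps', List.take_append_drop, ← List.append_assoc,
      List.take_append_drop]

theorem lprod_append_neutral (hn : 2 ≤ n) (hassoc : TotAssoc n μ) {α : List G}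
    (hα : ∀ z, lprod n μ z α = z) (hαl : n - 1 ∣ α.length) (p s : List G)
    (hps : n - 1 ∣ p.length + s.length) (x : G) :
    lprod n μ x (p ++ α ++ s) = lprod n μ x (p ++ s) := by
  rcases p.eq_nil_or_concat' with rfl | ⟨p, y, rfl⟩
  · rw [List.nil_append, lprod_append hn hαl, hα, List.nil_append]
  · have := lprod_lprod hn hassoc hαl y p s (by simpa [add_right_comm] using hps) x
    rw [hα] at this
    simpa using this.symm

theorem _root_.UniqSolv.bijective (hsolv : UniqSolv n μ) {u : List G} (hu : u.length = n - 1)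
    {i : ℕ} (hi : i ≤ n - 1) : Function.Bijective fun a => μ (u.take i ++ a :: u.drop i) :=
  (Function.bijective_iff_existsUnique _).2 fun g => hsolv u g hu i hi

theorem mu_replicate_ebar_replicate (hn : 1 ≤ n) (hassoc : TotAssoc n μ) (hsolv : UniqSolv n μ)
    (hebar : μ (List.replicate (n - 1) e ++ [ebar]) = e) {i : ℕ} (hi : i ≤ n - 1) :
    μ (List.replicate i e ++ ebar :: List.replicate (n - 1 - i) e) = e := by
  have key := hassoc [] (List.replicate (n - 1) e ++ [ebar]) (List.replicate (n - 1) e)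
    (List.replicate (n - 1 - i) e) (List.replicate i e ++ ebar :: List.replicate (n - 1 - i) e)
    (List.replicate i e) (by simp; omega) (by simp; omega) (by simp) (by simp; omega)
    (by simp; rw [← List.append_assoc, ← List.replicate_add, Nat.sub_add_cancel hi])
  rw [hebar] at key
  apply (UniqSolv.bijective hsolv (u := List.replicate (n - 1) e) (by simp)
    (i := n - 1 - i) (by omega)).injective
  simp only [List.take_replicate, List.drop_replicate, min_eq_left (Nat.sub_le _ _)]
  rw [Nat.sub_sub_self hi, ← key, List.nil_append, ← List.replicate_succ, ← List.replicate_succ,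
    ← List.replicate_add]
  congr 2
  omega

theorem mu_cons_replicate_ebar_e (hn : 3 ≤ n) (hassoc : TotAssoc n μ) (hsolv : UniqSolv n μ)
    (hebar : μ (List.replicate (n - 1) e ++ [ebar]) = e) (z : G) :
    μ (z :: (List.replicate (n - 3) e ++ [ebar, e])) = z := by
  obtain ⟨y, rfl⟩ := (UniqSolv.bijective hsolv (u := ebar :: List.replicate (n - 2) e)
    (by simp; omega) (i := 0) (by omega)).surjective z
  have hD := mu_replicate_ebar_replicate (by omega) hassoc hsolv hebar (i := n - 2) (by omega)
  rw [show n - 1 - (n - 2) = 1 by omega, List.replicate_one] at hD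
  have hw : List.replicate (n - 2) e ++ (List.replicate (n - 3) e ++ [ebar, e]) =
      List.replicate (n - 3) e ++ (List.replicate (n - 2) e ++ [ebar, e]) := by
    rw [← List.append_assoc, ← List.append_assoc, ← List.replicate_add, ← List.replicate_add,
      add_comm]
  have key := hassoc [] (y :: ebar :: List.replicate (n - 2) e)
    (List.replicate (n - 3) e ++ [ebar, e]) (y :: ebar :: List.replicate (n - 3) e)
    (List.replicate (n - 2) e ++ [ebar, e]) [] (by simp; omega) (by simp; omega)
    (by simp; omega) (by simp; omega) (by simpa using hw)
  simp only [List.take_zero, List.drop_zero, List.nil_append] at key ⊢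
  rw [key, hD, List.cons_append, List.cons_append, ← List.replicate_succ',
    show n - 3 + 1 = n - 2 by omega]

variable (n) in
def querWord (e ebar : G) (k : ℕ) : List G :=
  (List.replicate k (List.replicate (n - 3) e ++ [ebar])).flatten

@[simp]
theorem querWord_zero : querWord n e ebar 0 = [] := rfl

@[simp]
theorem querWord_one : querWord n e ebar 1 = List.replicate (n - 3) e ++ [ebar] := by
  simp [querWord]

theorem querWord_add (k l : ℕ) :
    querWord n e ebar (k + l) = querWord n e ebar k ++ querWord n e ebar l := by
  rw [querWord, List.replicate_add, List.flatten_append, querWord, querWord]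

theorem length_querWord (hn : 3 ≤ n) (k : ℕ) : (querWord n e ebar k).length = k * (n - 2) := by
  simp [querWord, show n - 3 + 1 = n - 2 by omega]

theorem length_append_querWord (hn : 3 ≤ n) {w : List G} {k : ℕ} (hw : w.length = k) :
    (w ++ querWord n e ebar k).length = (n - 1) * k := by
  rw [List.length_append, hw, length_querWord hn, show n - 1 = n - 2 + 1 by omega]
  ring

theorem length_querWord_append_replicate (hn : 3 ≤ n) (k : ℕ) :
    (querWord n e ebar k ++ List.replicate k e).length = (n - 1) * k := by
  rw [List.length_append, length_querWord hn, List.length_replicate,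
    show n - 1 = n - 2 + 1 by omega]
  ring

theorem lprod_querWord_append_replicate (hn : 3 ≤ n) (hassoc : TotAssoc n μ)
    (hsolv : UniqSolv n μ) (hebar : μ (List.replicate (n - 1) e ++ [ebar]) = e) (k : ℕ)
    (z : G) : lprod n μ z (querWord n e ebar k ++ List.replicate k e) = z := by
  induction k with
  | zero => simp
  | succ k ih =>
    have hsplit : querWord n e ebar (k + 1) ++ List.replicate (k + 1) e =
        querWord n e ebar k ++ (querWord n e ebar 1 ++ [e]) ++ List.replicate k e := by
      simp [querWord_add, List.replicate_succ]
    have hone (z : G) : lprod n μ z (querWord n e ebar 1 ++ [e]) = z := by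
      rw [lprod_of_length (by omega) (by simp; omega)]
      simpa using mu_cons_replicate_ebar_e hn hassoc hsolv hebar z
    rw [hsplit, lprod_append_neutral (by omega) hassoc hone ⟨1, by simp; omega⟩ _ _
      ⟨k, by rw [← List.length_append, length_querWord_append_replicate hn]⟩, ih]

theorem lprod_delete_querWord (hn : 3 ≤ n) (hassoc : TotAssoc n μ)
    (hsolv : UniqSolv n μ) (hebar : μ (List.replicate (n - 1) e ++ [ebar]) = e) (k : ℕ)
    (p s : List G) (hps : n - 1 ∣ p.length + s.length) (x : G) :
    lprod n μ x (p ++ (querWord n e ebar k ++ List.replicate k e) ++ s) = lprod n μ x (p ++ s) :=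
  lprod_append_neutral (by omega) hassoc (lprod_querWord_append_replicate hn hassoc hsolv hebar k)
    ⟨k, length_querWord_append_replicate hn k⟩ p s hps x

variable (n μ e ebar) in
def binMul (g h : G) : G := μ (g :: (List.replicate (n - 3) e ++ [ebar, h]))

variable (n μ e ebar) in
def hgAut (g : G) : G := μ (e :: g :: (List.replicate (n - 3) e ++ [ebar]))

theorem binMul_eq_lprod (hn : 3 ≤ n) (g h : G) :
    binMul n μ e ebar g h = lprod n μ g (querWord n e ebar 1 ++ [h]) := by
  rw [lprod_of_length (by omega) (by simp; omega), binMul]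
  simp

theorem hgAut_eq_lprod (hn : 3 ≤ n) (g : G) :
    hgAut n μ e ebar g = lprod n μ e (g :: querWord n e ebar 1) := by
  rw [lprod_of_length (by omega) (by simp; omega), hgAut, querWord_one]

theorem binMul_assoc (hn : 3 ≤ n) (hassoc : TotAssoc n μ) (a b c : G) :
    binMul n μ e ebar (binMul n μ e ebar a b) c =
      binMul n μ e ebar a (binMul n μ e ebar b c) := by
  simp only [binMul_eq_lprod hn]
  rw [← lprod_append (by omega) ⟨1, by simp; omega⟩,
    lprod_lprod (by omega) hassoc ⟨1, by simp; omega⟩ _ _ _ ⟨1, by simp; omega⟩]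
  simp

theorem binMul_e (hn : 3 ≤ n) (hassoc : TotAssoc n μ) (hsolv : UniqSolv n μ)
    (hebar : μ (List.replicate (n - 1) e ++ [ebar]) = e) (g : G) : binMul n μ e ebar g e = g :=
  mu_cons_replicate_ebar_e hn hassoc hsolv hebar g

theorem hgAut_bijective (hn : 3 ≤ n) (hsolv : UniqSolv n μ) :
    Function.Bijective (hgAut n μ e ebar) := by
  convert UniqSolv.bijective hsolv (u := e :: (List.replicate (n - 3) e ++ [ebar]))
    (by simp; omega) (i := 1) (by omega) using 1
  funext g
  simp [hgAut]

theorem hgAut_binMul (hn : 3 ≤ n) (hassoc : TotAssoc n μ) (hsolv : UniqSolv n μ)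
    (hebar : μ (List.replicate (n - 1) e ++ [ebar]) = e) (g h : G) :
    hgAut n μ e ebar (binMul n μ e ebar g h) =
      binMul n μ e ebar (hgAut n μ e ebar g) (hgAut n μ e ebar h) := by
  simp only [binMul_eq_lprod hn, hgAut_eq_lprod hn]
  set q := querWord n e ebar 1
  have hq : q.length = n - 2 := by simp [q]; omega
  calc lprod n μ e (lprod n μ g (q ++ [h]) :: q)
      = lprod n μ e (g :: q ++ (q ++ List.replicate 1 e) ++ h :: q) := by
        rw [lprod_delete_querWord hn hassoc hsolv hebar 1 (g :: q) (h :: q)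
          ⟨2, by simp [hq]; omega⟩]
        simpa using lprod_lprod (by omega) hassoc (c := q ++ [h]) ⟨1, by simp [hq]; omega⟩ g [] q
          ⟨1, by simp [hq]; omega⟩ e
    _ = lprod n μ e ((g :: q) ++ (q ++ [lprod n μ e (h :: q)])) := by
      simpa using (lprod_lprod (by omega) hassoc ⟨1, by simp [hq]; omega⟩ e (g :: q ++ q) []
        ⟨2, by simp [hq]; omega⟩ e).symm
    _ = lprod n μ (lprod n μ e (g :: q)) (q ++ [lprod n μ e (h :: q)]) :=
      lprod_append (by omega) ⟨1, by simp [hq]; omega⟩ _ _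

theorem hgAut_mu_replicate (hn : 3 ≤ n) (hassoc : TotAssoc n μ)
    (hebar : μ (List.replicate (n - 1) e ++ [ebar]) = e) :
    hgAut n μ e ebar (μ (List.replicate n e)) = μ (List.replicate n e) := by
  have key := hassoc [e] (List.replicate n e) (List.replicate (n - 3) e ++ [ebar])
    (List.replicate (n - 1) e) (List.replicate (n - 1) e ++ [ebar]) [] (by simp) (by simp; omega)
    (by simp; omega) (by simp) ?_
  · rw [hebar, ← List.replicate_succ', Nat.sub_add_cancel (by omega)] at key
    simpa [hgAut] using key
  · simp only [List.singleton_append, List.append_nil, ← List.append_assoc, ← List.replicate_succ,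
      ← List.replicate_add]
    congr 2
    omega

theorem binMul_mu_replicate (hn : 3 ≤ n) (hassoc : TotAssoc n μ)
    (hebar : μ (List.replicate (n - 1) e ++ [ebar]) = e) (g : G) :
    binMul n μ e ebar (μ (List.replicate n e)) g = μ (List.replicate (n - 1) e ++ [g]) := by
  have key := hassoc [] (List.replicate n e) (List.replicate (n - 3) e ++ [ebar, g])
    (List.replicate (n - 2) e) (List.replicate (n - 1) e ++ [ebar]) [g] (by simp) (by simp; omega)
    (by simp; omega) (by simp; omega) ?_
  · rw [hebar, List.nil_append] at key
    rw [binMul, key, show n - 1 = n - 2 + 1 by omega, List.replicate_succ']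
    simp
  · simp only [List.nil_append, ← List.append_assoc, ← List.replicate_add]
    rw [show n - 2 + (n - 1) = n + (n - 3) by omega]
    simp

theorem hgAut_iterate_succ (hn : 3 ≤ n) (hassoc : TotAssoc n μ) (k : ℕ) (g : G) :
    (hgAut n μ e ebar)^[k + 1] g =
      lprod n μ e (List.replicate k e ++ g :: querWord n e ebar (k + 1)) := by
  induction k with
  | zero => simp [hgAut_eq_lprod hn]
  | succ k ih =>
    have hc :
        (List.replicate k e ++ g :: querWord n e ebar (k + 1)).length = (n - 1) * (k + 1) := by
      simpa using length_append_querWord hn (w := List.replicate k e ++ [g]) (by simp)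
    rw [Function.iterate_succ_apply', ih, hgAut_eq_lprod hn, ← List.nil_append (_ :: _),
      lprod_lprod (by omega) hassoc ⟨k + 1, hc⟩ _ _ _ ⟨1, by simp; omega⟩]
    simp [querWord_add, List.replicate_succ]

theorem binMul_lprod_mu_replicate (hn : 3 ≤ n) (hassoc : TotAssoc n μ) (hsolv : UniqSolv n μ)
    (hebar : μ (List.replicate (n - 1) e ++ [ebar]) = e) {w : List G} (hw : w.length = n - 1)
    (x : G) :
    binMul n μ e ebar (lprod n μ x (w ++ querWord n e ebar (n - 1))) (μ (List.replicate n e)) =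
      μ (x :: w) := by
  have he1 : μ (List.replicate n e) = lprod n μ e (List.replicate (n - 1) e) := by
    rw [lprod_of_length (by omega) (by simp), ← List.replicate_succ, Nat.sub_add_cancel (by omega)]
  have hlen := length_append_querWord hn (e := e) (ebar := ebar) hw
  have hsplit : w ++ querWord n e ebar (n - 1) ++ querWord n e ebar 1 ++
      e :: (List.replicate (n - 1) e ++ []) =
      w ++ (querWord n e ebar n ++ List.replicate n e) ++ [] := by
    rw [← Nat.sub_add_cancel (show 1 ≤ n by omega)]
    simp [querWord_add, List.replicate_succ]
  rw [binMul_eq_lprod hn, ← lprod_append (by omega) ⟨n - 1, hlen⟩, he1, ← List.append_assoc,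
    lprod_lprod (by omega) hassoc ⟨1, by simp⟩ _ _ _ ⟨n - 1 + 1, ?_⟩, hsplit,
    lprod_delete_querWord hn hassoc hsolv hebar n _ _ ⟨1, by simp [hw]⟩, List.append_nil,
    lprod_of_length (by omega) hw]
  simp only [List.length_append, hlen, length_querWord hn, List.length_nil, Nat.mul_succ]
  omega

theorem binMul_iterate_hgAut_mu_replicate (hn : 3 ≤ n) (hassoc : TotAssoc n μ)
    (hsolv : UniqSolv n μ) (hebar : μ (List.replicate (n - 1) e ++ [ebar]) = e) (g : G) :
    binMul n μ e ebar ((hgAut n μ e ebar)^[n - 1] g) (μ (List.replicate n e)) =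
      binMul n μ e ebar (μ (List.replicate n e)) g := by
  have hiter : (hgAut n μ e ebar)^[n - 1] g =
      lprod n μ e ((List.replicate (n - 2) e ++ [g]) ++ querWord n e ebar (n - 1)) := by
    rw [show n - 1 = n - 2 + 1 by omega, hgAut_iterate_succ hn hassoc]
    simp
  rw [hiter, binMul_lprod_mu_replicate hn hassoc hsolv hebar (by simp; omega),
    binMul_mu_replicate hn hassoc hebar, show n - 1 = n - 2 + 1 by omega, List.replicate_succ]
  simp

theorem foldl_binMul_iterate_hgAut (hn : 3 ≤ n) (hassoc : TotAssoc n μ) (hsolv : UniqSolv n μ)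
    (hebar : μ (List.replicate (n - 1) e ++ [ebar]) = e) (g₀ : G) (gs : List G) :
    List.foldl (binMul n μ e ebar) g₀ (gs.mapIdx fun i x => (hgAut n μ e ebar)^[i + 1] x) =
      lprod n μ g₀ (gs ++ querWord n e ebar gs.length) := by
  induction gs using List.reverseRecOn with
  | nil => simp
  | append_singleton gs x ih =>
    rw [List.mapIdx_append_one, List.foldl_append, List.foldl_cons, List.foldl_nil, ih,
      hgAut_iterate_succ hn hassoc, binMul_eq_lprod hn]
    set k := gs.length
    have hgs := length_append_querWord hn (e := e) (ebar := ebar) (w := gs) (k := k) rfl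
    have hxs := length_append_querWord hn (e := e) (ebar := ebar)
      (w := List.replicate k e ++ [x]) (k := k + 1) (by simp)
    have hgx := length_append_querWord hn (e := e) (ebar := ebar)
      (w := gs ++ [x]) (k := k + 1) (by simp [k])
    have hq := length_querWord (e := e) (ebar := ebar) hn 1
    have hsplit : gs ++ querWord n e ebar k ++ querWord n e ebar 1 ++
        e :: (List.replicate k e ++ x :: querWord n e ebar (k + 1) ++ []) =
        gs ++ (querWord n e ebar (k + 1) ++ List.replicate (k + 1) e) ++
          x :: querWord n e ebar (k + 1) := by
      simp [querWord_add, List.replicate_succ]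
    rw [← lprod_append (by omega) ⟨k, hgs⟩, ← List.append_assoc,
      lprod_lprod (by omega) hassoc ⟨k + 1, by simpa using hxs⟩ _ _ _ ⟨k + 1, ?_⟩, hsplit,
      lprod_delete_querWord hn hassoc hsolv hebar _ _ _ ⟨k + 1, ?_⟩]
    · simp [k]
    all_goals
      simp only [List.length_append, List.length_cons, List.length_nil, one_mul] at hgs hgx hq ⊢
      rw [Nat.mul_succ] at hgx ⊢
      omega

end NaryGroup

open NaryGroup in
/-- **Hosszú–Gluskin theorem.** On an `n`-ary group (`n ≥ 3`) with
distinguished element `e` (querelement `ē`), the binary product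
`g ∗ h = μₙ[g, e^{n-3}, ē, h]` makes `G` a group with identity `e`, the map
`φ(g) = μₙ[e, g, e^{n-3}, ē]` is an automorphism of it, the first polyadic power
`e⟨1⟩ = μₙ[e,…,e]` is a fixed point of `φ`, the `(n-1)`-st power of `φ` is
conjugation by `e⟨1⟩`, and the chain formula
`μₙ[g₁,…,gₙ] = g₁ ∗ φ(g₂) ∗ ⋯ ∗ φ^{n-1}(gₙ) ∗ e⟨1⟩` holds. -/
theorem statement5 {G : Type*} (n : ℕ) (hn : 3 ≤ n)
    (μ : List G → G) (hassoc : TotAssoc n μ) (hsolv : UniqSolv n μ)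
    (e ebar : G) (hebar : μ (List.replicate (n - 1) e ++ [ebar]) = e)
    (st : G → G → G)
    (hst : ∀ g h : G, st g h = μ (g :: (List.replicate (n - 3) e ++ [ebar, h])))
    (φ : G → G)
    (hφ : ∀ g : G, φ g = μ (e :: g :: (List.replicate (n - 3) e ++ [ebar])))
    (e1 : G) (he1 : e1 = μ (List.replicate n e)) :
    Function.Bijective φ ∧
    (∀ g h : G, φ (st g h) = st (φ g) (φ h)) ∧
    φ e1 = e1 ∧
    (∀ (g w : G), st e1 w = e → st w e1 = e → φ^[n - 1] g = st (st e1 g) w) ∧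
    (∀ (g₀ : G) (rest : List G), rest.length = n - 1 →
      μ (g₀ :: rest) =
        st (List.foldl st g₀ (rest.mapIdx fun i x => φ^[i + 1] x)) e1) := by
  obtain rfl : st = binMul n μ e ebar := funext₂ hst
  obtain rfl : φ = hgAut n μ e ebar := funext hφ
  subst he1
  refine ⟨hgAut_bijective hn hsolv, hgAut_binMul hn hassoc hsolv hebar,
    hgAut_mu_replicate hn hassoc hebar, fun g w hw _ => ?_, fun g₀ rest hrest => ?_⟩
  · calc (hgAut n μ e ebar)^[n - 1] g
        = binMul n μ e ebar ((hgAut n μ e ebar)^[n - 1] g) e :=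
          (binMul_e hn hassoc hsolv hebar _).symm
      _ = binMul n μ e ebar ((hgAut n μ e ebar)^[n - 1] g)
          (binMul n μ e ebar (μ (List.replicate n e)) w) := by rw [hw]
      _ = _ := by
        rw [← binMul_assoc hn hassoc, binMul_iterate_hgAut_mu_replicate hn hassoc hsolv hebar]
  · rw [foldl_binMul_iterate_hgAut hn hassoc hsolv hebar, hrest,
      binMul_lprod_mu_replicate hn hassoc hsolv hebar hrest]
end

section
/- (Reverse Hosszú–Gluskin theorem.) Let n ≥ 2, let ⟨G, ∗, e⟩ be a group, and let φ be an automorphism of G such that for some element b ∈ G one has φ^{n−1}(g) = b ∗ g ∗ b⁻¹ for all g ∈ G and φ(b) = b. Then the operation μₙ[g₁, …, gₙ] := g₁ ∗ φ(g₂) ∗ φ²(g₃) ∗ ⋯ ∗ φ^{n−1}(gₙ) ∗ b is totally associative and uniquely solvable in each place, i.e. ⟨G, μₙ⟩ is an n-ary group; moreover b equals the first polyadic power of e in this n-ary group: b = μₙ[e, …, e]. -/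
namespace Statement6Aux

variable {G : Type*} [Group G] (φ : G ≃* G)

/-- Product `φ^[k] l₀ * φ^[k+1] l₁ * ⋯`. -/
def P (k : ℕ) (l : List G) : G :=
  (l.mapIdx fun i x => (⇑φ)^[k + i] x).prod

@[simp] lemma P_nil (k : ℕ) : P φ k ([] : List G) = 1 := by simp [P]

lemma P_cons (k : ℕ) (x : G) (l : List G) :
    P φ k (x :: l) = (⇑φ)^[k] x * P φ (k + 1) l := by
  have h : (fun i (x : G) => (⇑φ)^[k + (i + 1)] x) = fun i x => (⇑φ)^[k + 1 + i] x := by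
    funext i y
    congr 1
    omega
  simp only [P, List.mapIdx_cons, List.prod_cons, h, Nat.add_zero]

lemma P_append (k : ℕ) (l₁ l₂ : List G) :
    P φ k (l₁ ++ l₂) = P φ k l₁ * P φ (k + l₁.length) l₂ := by
  induction l₁ generalizing k with
  | nil => simp
  | cons x l ih =>
      simp only [List.cons_append, P_cons, ih, List.length_cons, mul_assoc]
      congr 3
      omega

lemma iter_mul (k : ℕ) (x y : G) :
    (⇑φ)^[k] (x * y) = (⇑φ)^[k] x * (⇑φ)^[k] y := by
  induction k with
  | zero => simp
  | succ m ih => simp [Function.iterate_succ_apply', ih]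

lemma iter_one (k : ℕ) : (⇑φ)^[k] (1 : G) = 1 := by
  induction k with
  | zero => simp
  | succ m ih => simp [Function.iterate_succ_apply', ih]

lemma iter_P (k m : ℕ) (l : List G) : (⇑φ)^[k] (P φ m l) = P φ (k + m) l := by
  induction l generalizing m with
  | nil => simp [iter_one]
  | cons x l ih =>
      rw [P_cons, iter_mul, ← Function.iterate_add_apply, P_cons, ih, Nat.add_assoc]

variable {φ} {n : ℕ} {b : G}

lemma iter_b (hfix : φ b = b) (k : ℕ) : (⇑φ)^[k] b = b := by
  induction k with
  | zero => rfl
  | succ m ih => rw [Function.iterate_succ_apply', ih, hfix]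

lemma b_shift (hconj : ∀ g : G, (⇑φ)^[n - 1] g = b * g * b⁻¹) (j : ℕ) (x : G) :
    b * (⇑φ)^[j] x = (⇑φ)^[n - 1 + j] x * b := by
  rw [Function.iterate_add_apply, hconj]
  group

lemma b_P_shift (hconj : ∀ g : G, (⇑φ)^[n - 1] g = b * g * b⁻¹) (k : ℕ) (l : List G) :
    b * P φ k l = P φ (n - 1 + k) l * b := by
  induction l generalizing k with
  | nil => simp
  | cons x l ih =>
      rw [P_cons, P_cons, ← mul_assoc, b_shift hconj, mul_assoc, ih, ← mul_assoc, Nat.add_assoc]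

lemma P_replicate_one (k m : ℕ) : P φ k (List.replicate m (1 : G)) = 1 := by
  induction m generalizing k with
  | zero => simp
  | succ j ih => rw [List.replicate_succ, P_cons, iter_one, ih, one_mul]

end Statement6Aux



/-- **reverse Hosszú–Gluskin theorem.** If `φ` is an automorphism
of a group `⟨G, ∗, 1⟩` such that `φ^{n-1}` is conjugation by some `b ∈ G` and
`φ(b) = b`, then `μₙ[g₁,…,gₙ] = g₁ ∗ φ(g₂) ∗ ⋯ ∗ φ^{n-1}(gₙ) ∗ b` is totally
associative and uniquely solvable (i.e. an `n`-ary group), and `b` is the first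
polyadic power of the identity: `b = μₙ[1,…,1]`. -/
theorem statement6 {G : Type*} [Group G] (n : ℕ) (hn : 2 ≤ n)
    (φ : G ≃* G) (b : G)
    (hconj : ∀ g : G, (⇑φ)^[n - 1] g = b * g * b⁻¹)
    (hfix : φ b = b)
    (μ : List G → G)
    (hμ : ∀ l : List G, μ l = (l.mapIdx fun i x => (⇑φ)^[i] x).prod * b) :
    TotAssoc n μ ∧ UniqSolv n μ ∧ b = μ (List.replicate n 1) := by
  classical
  open Statement6Aux in
  have hμ' : ∀ l : List G, μ l = P φ 0 l * b := by
    intro l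
    rw [hμ]
    congr 1
    simp [P, Nat.zero_add]
  have hls : ∀ (i : ℕ) (x : G), (⇑φ)^[i] ((⇑φ.symm)^[i] x) = x := fun i x =>
    Function.LeftInverse.iterate φ.apply_symm_apply i x
  have key : ∀ p c s : List G, c.length = n →
      μ (p ++ μ c :: s) = P φ 0 (p ++ c ++ s) * b * b := by
    intro p c s hc
    rw [hμ' (p ++ μ c :: s), P_append, P_cons, hμ' c, iter_mul, iter_P, iter_b hfix,
      Nat.add_zero, Nat.zero_add]
    rw [P_append, P_append, Nat.zero_add, Nat.zero_add, List.length_append, hc]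
    have hb := b_P_shift hconj (p.length + 1) s
    have he : n - 1 + (p.length + 1) = p.length + n := by omega
    rw [he] at hb
    rw [mul_assoc (P φ p.length c) b, hb]
    simp [mul_assoc]
  refine ⟨?_, ?_, ?_⟩
  · intro p₁ c₁ s₁ p₂ c₂ s₂ h₁ h₂ _ _ heq
    rw [key _ _ _ h₁, key _ _ _ h₂, heq]
  · intro u g hu i hi
    have hti : (u.take i).length = i := by rw [List.length_take]; omega
    have hform : ∀ h : G, μ (u.take i ++ h :: u.drop i) =
        P φ 0 (u.take i) * ((⇑φ)^[i] h * P φ (i + 1) (u.drop i)) * b := by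
      intro h
      rw [hμ', P_append, P_cons, hti, Nat.zero_add]
    set A := P φ 0 (u.take i) with hA
    set C := P φ (i + 1) (u.drop i) with hC
    refine ⟨(⇑φ.symm)^[i] (A⁻¹ * (g * b⁻¹ * C⁻¹)), ?_, ?_⟩
    · show μ _ = g
      rw [hform, hls]
      group
    · intro y hy
      rw [hform] at hy
      apply Function.Injective.iterate φ.injective i
      rw [hls, ← hy]
      group
  · rw [hμ', P_replicate_one, one_mul]
end

section
/- (q-deformed Hosszú–Gluskin chain formula.) Let n ≥ 3, let G be an n-ary group with multiplication μₙ, fix e ∈ G with querelement ē, and let g ∗ h := μₙ[g, e^{n−3}, ē, h] be the associated binary group with identity e. Let q ≥ 1 be an integer such that ℓ_φ(q) := (q(n−2)+1)/(n−1) is a positive integer, define φ_q(g) as the ℓ_φ(q)-fold iterated μₙ-product of the sequence (e, g, followed by q copies of the polyadic inverse (e^{n−3}, ē)), and let b_q be the iterated μₙ-product of [[n]]_q := (qⁿ−1)/(q−1) copies of e. Then for all g₁, …, gₙ ∈ G: μₙ[g₁, …, gₙ] = g₁ ∗ φ_q^{[[1]]_q}(g₂) ∗ φ_q^{[[2]]_q}(g₃)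 ∗ ⋯ ∗ φ_q^{[[n−1]]_q}(gₙ) ∗ b_q, where [[k]]_q := (q^k−1)/(q−1). -/
/-- The `ℓ`-fold iterated (left-nested) `n`-ary product of a list of
`ℓ(n-1)+1` elements; for `ℓ = 0` it returns the single element of the list. -/
def iterMu {G : Type*} (μ : List G → G) (n : ℕ) : ℕ → List G → G
  | 0, [] => μ []
  | 0, a :: _ => a
  | ℓ + 1, l => iterMu μ n ℓ (μ (l.take n) :: l.drop n)

/-- The Heine (`q`-deformed) number `[[k]]_q = (q^k - 1)/(q - 1)`, with `[[k]]₁ = k`. -/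
def heine (q k : ℕ) : ℕ := if q = 1 then k else (q ^ k - 1) / (q - 1)

section IterMu

variable {G : Type*} (μ : List G → G) {d : ℕ}

lemma iterMu_succ_append {L : List G} (hL : L.length = d + 1) (R : List G) (ℓ : ℕ) :
    iterMu μ (d + 1) (ℓ + 1) (L ++ R) = iterMu μ (d + 1) ℓ (μ L :: R) := by
  rw [iterMu, List.take_left' hL, List.drop_left' hL]

lemma iterMu_one {L : List G} (hL : L.length = d + 1) : iterMu μ (d + 1) 1 L = μ L := by
  simpa [iterMu] using iterMu_succ_append μ hL [] 0

variable {μ}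

lemma iterMu_succ_append_append (hassoc : TotAssoc (d + 1) μ) {C : List G}
    (hC : C.length = d + 1) (ℓ : ℕ) (A B : List G) (hAB : A.length + B.length = ℓ * d) :
    iterMu μ (d + 1) (ℓ + 1) (A ++ C ++ B) = iterMu μ (d + 1) ℓ (A ++ μ C :: B) := by
  induction ℓ generalizing A B with
  | zero =>
    obtain ⟨rfl, rfl⟩ : A = [] ∧ B = [] := by simpa using hAB
    simpa [iterMu] using iterMu_succ_append μ hC [] 0
  | succ ℓ ih =>
    by_cases hA : d + 1 ≤ A.length
    · obtain ⟨A₁, A₂, rfl, hA₁⟩ : ∃ A₁ A₂, A = A₁ ++ A₂ ∧ A₁.length = d + 1 :=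
        ⟨A.take (d + 1), A.drop (d + 1), (List.take_append_drop _ _).symm, by simp; omega⟩
      have h := ih (μ A₁ :: A₂) B (by simp at hAB ⊢; rw [Nat.succ_mul] at hAB; omega)
      simp only [List.append_assoc, List.cons_append] at h ⊢
      rw [iterMu_succ_append μ hA₁, iterMu_succ_append μ hA₁]
      simpa using h
    · -- the first window of the left side cuts `C` as `C₁ ++ C₂`; total associativity moves
      -- the inner product from `A ++ C₁` to `C`
      obtain ⟨C₁, C₂, rfl, hC₂⟩ : ∃ C₁ C₂, C = C₁ ++ C₂ ∧ C₂.length = A.length :=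
        ⟨C.take (d + 1 - A.length), C.drop (d + 1 - A.length),
          (List.take_append_drop _ _).symm, by simp; omega⟩
      obtain ⟨B₁, B₂, rfl, hB₁⟩ : ∃ B₁ B₂, B = B₁ ++ B₂ ∧ B₁.length + A.length = d :=
        ⟨B.take (d - A.length), B.drop (d - A.length), (List.take_append_drop _ _).symm, by
          simp [Nat.succ_mul] at hAB hC ⊢; omega⟩
      simp only [List.length_append] at hC
      have hAC₁ : (A ++ C₁).length = d + 1 := by simp; omega
      have key := hassoc [] (A ++ C₁) (C₂ ++ B₁) A (C₁ ++ C₂) B₁ hAC₁ (by simpa using hC)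
        (by simp; omega) (by omega) (by simp)
      have hW : (μ (A ++ C₁) :: (C₂ ++ B₁)).length = d + 1 := by simp; omega
      have hV : (A ++ μ (C₁ ++ C₂) :: B₁).length = d + 1 := by simp; omega
      rw [show A ++ (C₁ ++ C₂) ++ (B₁ ++ B₂) = (A ++ C₁) ++ (C₂ ++ B₁ ++ B₂) by simp,
        iterMu_succ_append μ hAC₁, ← List.cons_append, iterMu_succ_append μ hW,
        show A ++ μ (C₁ ++ C₂) :: (B₁ ++ B₂) = (A ++ μ (C₁ ++ C₂) :: B₁) ++ B₂ by simp,
        iterMu_succ_append μ hV]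
      simpa using congrArg (iterMu μ (d + 1) ℓ <| · :: B₂) key

lemma iterMu_add_append_append (hassoc : TotAssoc (d + 1) μ) (m : ℕ) {C : List G}
    (hC : C.length = m * d + 1) (ℓ : ℕ) (A B : List G) (hAB : A.length + B.length = ℓ * d) :
    iterMu μ (d + 1) (m + ℓ) (A ++ C ++ B)
      = iterMu μ (d + 1) ℓ (A ++ iterMu μ (d + 1) m C :: B) := by
  induction m generalizing C with
  | zero =>
    obtain ⟨c, rfl⟩ := List.length_eq_one_iff.mp (by simpa using hC)
    simp [iterMu]
  | succ m ih =>
    obtain ⟨C₁, C₂, rfl, hC₁⟩ : ∃ C₁ C₂, C = C₁ ++ C₂ ∧ C₁.length = d + 1 :=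
      ⟨C.take (d + 1), C.drop (d + 1), (List.take_append_drop _ _).symm, by
        simp [Nat.succ_mul] at hC ⊢; omega⟩
    simp only [List.length_append, Nat.succ_mul] at hC
    have h := iterMu_succ_append_append hassoc hC₁ (m + ℓ) A (C₂ ++ B) (by
      simp [Nat.add_mul]; omega)
    rw [iterMu_succ_append μ hC₁, ← ih (by simp; omega), show m + 1 + ℓ = m + ℓ + 1 by omega]
    simpa using h

end IterMu

section WordProd

variable {G : Type*} (μ : List G → G) (d : ℕ)

/-- The iterated product of a word, the number of multiplications read off from its length
(meaningful for lengths `≡ 1 mod d`). -/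
def wordProd (l : List G) : G := iterMu μ (d + 1) ((l.length - 1) / d) l

variable {μ d}

lemma iterMu_eq_wordProd (hd : 0 < d) {ℓ : ℕ} {l : List G} (hl : l.length = ℓ * d + 1) :
    iterMu μ (d + 1) ℓ l = wordProd μ d l := by
  rw [wordProd, hl, Nat.add_sub_cancel, Nat.mul_div_cancel _ hd]

@[simp] lemma wordProd_singleton (x : G) : wordProd μ d [x] = x := by
  simp [wordProd, iterMu]

lemma wordProd_of_length_eq (hd : 0 < d) {l : List G} (hl : l.length = d + 1) :
    wordProd μ d l = μ l := by
  rw [← iterMu_eq_wordProd hd (ℓ := 1) (by simpa using hl), iterMu_one μ hl]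

lemma exists_eq_mul_add_one_of_natCast_eq_one (hd : 1 < d) {N : ℕ} (h : (N : ZMod d) = 1) :
    ∃ m, N = m * d + 1 := by
  rw [← Nat.cast_one, ZMod.natCast_eq_natCast_iff', Nat.mod_eq_of_lt hd] at h
  exact ⟨N / d, by rw [mul_comm, ← h, Nat.div_add_mod]⟩

lemma wordProd_append_wordProd_cons (hassoc : TotAssoc (d + 1) μ) (hd : 1 < d)
    {A C B : List G} (hC : (C.length : ZMod d) = 1) (hAB : ((A ++ B).length : ZMod d) = 0) :
    wordProd μ d (A ++ wordProd μ d C :: B) = wordProd μ d (A ++ C ++ B) := by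
  obtain ⟨m, hm⟩ := exists_eq_mul_add_one_of_natCast_eq_one hd hC
  obtain ⟨ℓ, hℓ⟩ := (ZMod.natCast_eq_zero_iff _ _).mp hAB
  rw [List.length_append, mul_comm] at hℓ
  have h := iterMu_add_append_append hassoc m hm ℓ A B hℓ
  rwa [iterMu_eq_wordProd (by omega) (by simp; linarith), iterMu_eq_wordProd (by omega) hm,
    iterMu_eq_wordProd (by omega) (by simp; linarith), eq_comm] at h

end WordProd

section Heine

open Finset in
lemma heine_eq_sum_range_pow {q : ℕ} (hq : q ≠ 0) (k : ℕ) : heine q k = ∑ i ∈ range k, q ^ i := by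
  unfold heine
  split_ifs with h
  · simp [h]
  · rw [Nat.geomSum_eq (by omega)]

@[simp] lemma heine_zero (q : ℕ) : heine q 0 = 0 := by
  unfold heine
  split_ifs <;> simp

lemma heine_succ {q : ℕ} (hq : q ≠ 0) (k : ℕ) : heine q (k + 1) = q * heine q k + 1 := by
  simp only [heine_eq_sum_range_pow hq, geom_sum_succ]

lemma natCast_heine_of_natCast_eq_one {R : Type*} [Semiring R] {q : ℕ} (hq : (q : R) = 1)
    (k : ℕ) : (heine q k : R) = k := by
  rcases eq_or_ne q 0 with rfl | hq₀
  · have := subsingleton_of_zero_eq_one (by simpa using hq)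
    exact Subsingleton.elim _ _
  induction k with
  | zero => simp
  | succ k ih => simp [heine_succ hq₀, hq, ih]

end Heine

lemma ne_zero_of_natCast_eq_one {d q : ℕ} (hd : 1 < d) (hq : (q : ZMod d) = 1) : q ≠ 0 := by
  have : Fact (1 < d) := ⟨hd⟩
  rintro rfl
  simp at hq

lemma natCast_eq_neg_one_of_add_one_eq {d N : ℕ} (h : N + 1 = d) : (N : ZMod d) = -1 :=
  eq_neg_of_add_eq_zero_left (by subst h; exact_mod_cast ZMod.natCast_self _)

section Chain

/-! `t ++ [a]` is a right neutral word of length `d`; in the application `t` is the polyadic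
inverse `(e^{n-3}, ē)` of `a = e`. -/

variable {G : Type*} {μ : List G → G} {d : ℕ} {t : List G} {a : G}

lemma wordProd_cancel_neutral (hassoc : TotAssoc (d + 1) μ) (hd : 1 < d)
    (ht : t.length + 1 = d) (hneutral : ∀ x, μ (x :: t ++ [a]) = x) (m : ℕ)
    {A : List G} (hA : A ≠ []) (B : List G) (hAB : ((A ++ B).length : ZMod d) = 1) :
    wordProd μ d (A ++ (List.replicate m t).flatten ++ List.replicate m a ++ B)
      = wordProd μ d (A ++ B) := by
  have ht' := natCast_eq_neg_one_of_add_one_eq ht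
  induction m generalizing A B with
  | zero => simp
  | succ m ih =>
    rw [show A ++ (List.replicate (m + 1) t).flatten ++ List.replicate (m + 1) a ++ B
        = (A ++ t) ++ (List.replicate m t).flatten ++ List.replicate m a ++ ([a] ++ B) by
          rw [List.replicate_succ, List.flatten_cons, List.replicate_succ']
          simp only [List.append_assoc],
      ih (by simp [hA]) _ (by simp at hAB ⊢; rw [ht']; linear_combination hAB)]
    obtain ⟨A, x, rfl⟩ := List.eq_nil_or_concat' A |>.resolve_left hA
    simp only [List.length_append, List.length_singleton] at hAB
    calc wordProd μ d (A ++ [x] ++ t ++ ([a] ++ B))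
        = wordProd μ d (A ++ (x :: t ++ [a]) ++ B) := by simp
      _ = wordProd μ d (A ++ [x] ++ B) := by
        rw [← wordProd_append_wordProd_cons hassoc hd (by simp; rw [ht']; ring)
          (by simp; push_cast at hAB; linear_combination hAB),
          wordProd_of_length_eq (l := x :: t ++ [a]) (by omega) (by simp; omega), hneutral]
        simp

lemma star_wordProd_wordProd (hassoc : TotAssoc (d + 1) μ) (hd : 1 < d)
    (ht : t.length + 1 = d) {star : G → G → G} (hstar : ∀ g h, star g h = μ (g :: t ++ [h]))
    {S T : List G} (hS : (S.length : ZMod d) = 1) (hT : (T.length : ZMod d) = 1) :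
    star (wordProd μ d S) (wordProd μ d T) = wordProd μ d (S ++ t ++ T) := by
  have ht' := natCast_eq_neg_one_of_add_one_eq ht
  calc star (wordProd μ d S) (wordProd μ d T)
      = wordProd μ d ((wordProd μ d S :: t) ++ wordProd μ d T :: []) := by
        rw [hstar]; exact (wordProd_of_length_eq (by omega) (by simp; omega)).symm
    _ = wordProd μ d ([] ++ wordProd μ d S :: (t ++ T)) := by
        rw [wordProd_append_wordProd_cons hassoc hd hT (by simp; rw [ht']; ring)]
        simp
    _ = wordProd μ d (S ++ t ++ T) := by
        rw [wordProd_append_wordProd_cons hassoc hd hS (by simp [hT, ht'])]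
        simp

lemma star_wordProd_wordProd_cancel (hassoc : TotAssoc (d + 1) μ) (hd : 1 < d)
    (ht : t.length + 1 = d) (hneutral : ∀ x, μ (x :: t ++ [a]) = x)
    {star : G → G → G} (hstar : ∀ g h, star g h = μ (g :: t ++ [h])) (m : ℕ)
    {A : List G} (hA : A ≠ []) {B : List G}
    (hAm : ((A ++ (List.replicate m t).flatten).length : ZMod d) = 1)
    (hmB : ((List.replicate (m + 1) a ++ B).length : ZMod d) = 1) :
    star (wordProd μ d (A ++ (List.replicate m t).flatten))
      (wordProd μ d (List.replicate (m + 1) a ++ B)) = wordProd μ d (A ++ B) := by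
  have ht' := natCast_eq_neg_one_of_add_one_eq ht
  simp [ht'] at hAm hmB
  rw [star_wordProd_wordProd hassoc hd ht hstar (by simpa [ht'] using hAm) (by simpa using hmB),
    ← wordProd_cancel_neutral hassoc hd ht hneutral (m + 1) hA B
      (by simp; linear_combination hAm + hmB),
    List.replicate_succ' (a := t), List.flatten_append]
  simp

lemma iterate_eq_wordProd (hassoc : TotAssoc (d + 1) μ) (hd : 1 < d)
    (ht : t.length + 1 = d) {q : ℕ} (hq : (q : ZMod d) = 1) {φ : G → G}
    (hφ : ∀ g, φ g = wordProd μ d (a :: g :: (List.replicate q t).flatten)) (m : ℕ) (g : G) :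
    φ^[m] g = wordProd μ d (List.replicate m a ++ g :: (List.replicate (q * m) t).flatten) := by
  have ht' := natCast_eq_neg_one_of_add_one_eq ht
  induction m generalizing g with
  | zero => simp
  | succ m ih =>
    rw [Function.iterate_succ_apply, ih, hφ,
      wordProd_append_wordProd_cons hassoc hd (by simp [hq, ht']) (by simp [hq, ht']),
      show q * (m + 1) = q + q * m by ring, List.replicate_add q, List.flatten_append,
      List.replicate_succ']
    simp

/-- The trailing `t^{q [[l.length]]}` is cancelled by the next factor of the chain. -/
lemma foldl_star_mapIdx_iterate (hassoc : TotAssoc (d + 1) μ) (hd : 1 < d)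
    (ht : t.length + 1 = d) (hneutral : ∀ x, μ (x :: t ++ [a]) = x)
    {star : G → G → G} (hstar : ∀ g h, star g h = μ (g :: t ++ [h]))
    {q : ℕ} (hq : (q : ZMod d) = 1) {φ : G → G}
    (hφ : ∀ g, φ g = wordProd μ d (a :: g :: (List.replicate q t).flatten)) (g₀ : G)
    (l : List G) :
    (l.mapIdx fun i x => φ^[heine q (i + 1)] x).foldl star g₀
      = wordProd μ d (g₀ :: l ++ (List.replicate (q * heine q l.length) t).flatten) := by
  have ht' := natCast_eq_neg_one_of_add_one_eq ht
  have hheine := natCast_heine_of_natCast_eq_one hq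
  induction l using List.reverseRecOn with
  | nil => simp
  | append_singleton l x ih =>
    rw [List.mapIdx_append_one, List.foldl_concat, ih, iterate_eq_wordProd hassoc hd ht hq hφ,
      heine_succ (ne_zero_of_natCast_eq_one hd hq),
      star_wordProd_wordProd_cancel hassoc hd ht hneutral hstar _ (List.cons_ne_nil _ _)
        (by simp [hq, ht', hheine]) (by simp [hq, ht', hheine])]
    simp [heine_succ (ne_zero_of_natCast_eq_one hd hq)]

theorem mu_eq_star_foldl_star_mapIdx_iterate (hassoc : TotAssoc (d + 1) μ) (hd : 1 < d)
    (ht : t.length + 1 = d) (hneutral : ∀ x, μ (x :: t ++ [a]) = x)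
    {star : G → G → G} (hstar : ∀ g h, star g h = μ (g :: t ++ [h]))
    {q : ℕ} (hq : (q : ZMod d) = 1) {φ : G → G}
    (hφ : ∀ g, φ g = wordProd μ d (a :: g :: (List.replicate q t).flatten))
    (g₀ : G) {l : List G} (hl : l.length = d) :
    μ (g₀ :: l) = star ((l.mapIdx fun i x => φ^[heine q (i + 1)] x).foldl star g₀)
      (wordProd μ d (List.replicate (heine q (d + 1)) a)) := by
  have ht' := natCast_eq_neg_one_of_add_one_eq ht
  have hheine := natCast_heine_of_natCast_eq_one hq
  rw [foldl_star_mapIdx_iterate hassoc hd ht hneutral hstar hq hφ, hl,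
    heine_succ (ne_zero_of_natCast_eq_one hd hq), ← List.append_nil (List.replicate _ a),
    star_wordProd_wordProd_cancel hassoc hd ht hneutral hstar _ (List.cons_ne_nil _ _)
      (by simp [hl, hq, ht', hheine]) (by simp [hq, hheine]),
    List.append_nil, wordProd_of_length_eq (by omega) (by simp [hl])]

end Chain

section Querelement

variable {G : Type*} {μ : List G → G} {k : ℕ} {e : G}

lemma right_neutral_of_mu_replicate_append (hassoc : TotAssoc (k + 3) μ)
    (hsolv : UniqSolv (k + 3) μ) {c : G} (hc : μ (List.replicate (k + 2) e ++ [c]) = e)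
    (x : G) : μ (x :: List.replicate (k + 1) e ++ [c]) = x := by
  obtain ⟨z, hz, -⟩ := hsolv (List.replicate (k + 2) e) x (by simp) 0 (by omega)
  simp only [List.take_zero, List.drop_zero, List.nil_append] at hz
  have h := hassoc [] (z :: List.replicate (k + 2) e) (List.replicate (k + 1) e ++ [c])
    (z :: List.replicate (k + 1) e) (List.replicate (k + 2) e ++ [c]) [] (by simp) (by simp)
    (by simp) (by simp) (by simp [← List.append_assoc, add_comm])
  simp only [List.nil_append, hz, hc] at h
  rw [List.cons_append, h, ← hz, List.replicate_succ' (n := k + 1)]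
  simp

lemma left_neutral_of_mu_cons_replicate (hassoc : TotAssoc (k + 3) μ)
    (hsolv : UniqSolv (k + 3) μ) {c : G} (hc : μ (c :: List.replicate (k + 2) e) = e)
    (x : G) : μ (c :: List.replicate (k + 1) e ++ [x]) = x := by
  obtain ⟨z, hz, -⟩ := hsolv (List.replicate (k + 2) e) x (by simp) (k + 2) (by omega)
  rw [List.take_of_length_le (by simp), List.drop_of_length_le (by simp)] at hz
  have h := hassoc (c :: List.replicate (k + 1) e) (List.replicate (k + 2) e ++ [z]) []
    [] (c :: List.replicate (k + 2) e) (List.replicate (k + 1) e ++ [z]) (by simp) (by simp)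
    (by simp) (by simp) (by simp [← List.append_assoc, add_comm])
  simp only [List.nil_append, hz, hc] at h
  rw [h, ← hz, List.replicate_succ (n := k + 1)]
  simp

lemma mu_cons_replicate_of_mu_replicate_append (hassoc : TotAssoc (k + 3) μ)
    (hsolv : UniqSolv (k + 3) μ) {ebar : G}
    (hebar : μ (List.replicate (k + 2) e ++ [ebar]) = e) :
    μ (ebar :: List.replicate (k + 2) e) = e := by
  obtain ⟨c, hc, -⟩ := hsolv (List.replicate (k + 2) e) e (by simp) 0 (by omega)
  simp only [List.take_zero, List.drop_zero, List.nil_append] at hc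
  have : c = ebar := (right_neutral_of_mu_replicate_append hassoc hsolv hebar c).symm.trans
    (left_neutral_of_mu_cons_replicate hassoc hsolv hc ebar)
  rwa [← this]

lemma mu_cons_replicate_append_append_self (hassoc : TotAssoc (k + 3) μ)
    (hsolv : UniqSolv (k + 3) μ) {ebar : G}
    (hebar : μ (List.replicate (k + 2) e ++ [ebar]) = e) (x : G) :
    μ (x :: (List.replicate k e ++ [ebar]) ++ [e]) = x := by
  have h := hassoc (x :: List.replicate k e) (ebar :: List.replicate (k + 2) e) [ebar]
    (x :: List.replicate k e ++ [ebar]) (List.replicate (k + 2) e ++ [ebar]) [] (by simp)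
    (by simp) (by simp) (by simp) (by simp)
  rw [mu_cons_replicate_of_mu_replicate_append hassoc hsolv hebar, hebar] at h
  calc μ (x :: (List.replicate k e ++ [ebar]) ++ [e])
      = μ (x :: List.replicate (k + 1) e ++ [ebar]) := by
        rw [List.replicate_succ']; simpa using h.symm
    _ = x := right_neutral_of_mu_replicate_append hassoc hsolv hebar x

end Querelement

theorem statement7_general {G : Type*} (n q : ℕ) (hn : 3 ≤ n)
    (μ : List G → G) (hassoc : TotAssoc n μ) (hsolv : UniqSolv n μ)
    (e ebar : G) (hebar : μ (List.replicate (n - 1) e ++ [ebar]) = e)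
    (st : G → G → G)
    (hst : ∀ g h : G, st g h = μ (g :: (List.replicate (n - 3) e ++ [ebar, h])))
    (lphi : ℕ) (hlphi : lphi * (n - 1) = q * (n - 2) + 1)
    (φq : G → G)
    (hφq : ∀ g : G, φq g = iterMu μ n lphi
      (e :: g :: (List.replicate q (List.replicate (n - 3) e ++ [ebar])).flatten))
    (le : ℕ) (hle : le * (n - 1) + 1 = heine q n)
    (bq : G) (hbq : bq = iterMu μ n le (List.replicate (heine q n) e)) :
    ∀ (g₀ : G) (rest : List G), rest.length = n - 1 →
      μ (g₀ :: rest) =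
        st (List.foldl st g₀ (rest.mapIdx fun i x => φq^[heine q (i + 1)] x)) bq := by
  obtain ⟨k, rfl⟩ : ∃ k, n = k + 3 := ⟨n - 3, by omega⟩
  simp only [show k + 3 - 1 = k + 2 by omega, show k + 3 - 2 = k + 1 by omega,
    Nat.add_sub_cancel] at hebar hst hlphi hφq hle ⊢
  set t := List.replicate k e ++ [ebar]
  have ht : t.length + 1 = k + 2 := by simp [t]
  -- `ℓ_φ(q)` is an integer exactly when `q ≡ 1 mod n - 1`
  have hq : (q : ZMod (k + 2)) = 1 := by
    have h := congrArg (Nat.cast : ℕ → ZMod (k + 2)) hlphi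
    push_cast at h
    have h₀ : (k + 2 : ZMod (k + 2)) = 0 := by exact_mod_cast ZMod.natCast_self (k + 2)
    linear_combination h - (lphi - q : ZMod (k + 2)) * h₀
  have hφ (g : G) : φq g = wordProd μ (k + 2) (e :: g :: (List.replicate q t).flatten) := by
    rw [hφq, iterMu_eq_wordProd (by omega) (by simp [t]; linarith)]
  rw [hbq, iterMu_eq_wordProd (by omega) (by simpa using hle.symm)]
  intro g₀ rest hrest
  exact mu_eq_star_foldl_star_mapIdx_iterate hassoc (by omega) ht
    (mu_cons_replicate_append_append_self hassoc hsolv hebar) (by simpa [t] using hst) hq hφ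
    g₀ hrest

/-- **q-deformed Hosszú–Gluskin chain formula.** On an `n`-ary
group (`n ≥ 3`) with distinguished element `e` (querelement `ē`), binary product
`g ∗ h = μₙ[g, e^{n-3}, ē, h]`, and an integer `q ≥ 1` with
`ℓ_φ(q) = (q(n-2)+1)/(n-1)` a positive integer, let `φ_q(g)` be the
`ℓ_φ(q)`-fold iterated μ-product of `(e, g, (e^{n-3}, ē)^q)` and `b_q` the
iterated μ-product of `[[n]]_q` copies of `e`. Then
`μₙ[g₁,…,gₙ] = g₁ ∗ φ_q^{[[1]]_q}(g₂) ∗ ⋯ ∗ φ_q^{[[n-1]]_q}(gₙ) ∗ b_q`. -/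
theorem statement7 {G : Type*} (n q : ℕ) (hn : 3 ≤ n) (hq : 1 ≤ q)
    (μ : List G → G) (hassoc : TotAssoc n μ) (hsolv : UniqSolv n μ)
    (e ebar : G) (hebar : μ (List.replicate (n - 1) e ++ [ebar]) = e)
    (st : G → G → G)
    (hst : ∀ g h : G, st g h = μ (g :: (List.replicate (n - 3) e ++ [ebar, h])))
    (lphi : ℕ) (hlphi : lphi * (n - 1) = q * (n - 2) + 1)
    (φq : G → G)
    (hφq : ∀ g : G, φq g = iterMu μ n lphi
      (e :: g :: (List.replicate q (List.replicate (n - 3) e ++ [ebar])).flatten))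
    (le : ℕ) (hle : le * (n - 1) + 1 = heine q n)
    (bq : G) (hbq : bq = iterMu μ n le (List.replicate (heine q n) e)) :
    ∀ (g₀ : G) (rest : List G), rest.length = n - 1 →
      μ (g₀ :: rest) =
        st (List.foldl st g₀ (rest.mapIdx fun i x => φq^[heine q (i + 1)] x)) bq :=
  statement7_general n q hn μ hassoc hsolv e ebar hebar st hst lphi hlphi φq hφq le hle bq hbq
end

section
/- Let n ≥ 3, let G be an n-ary group with multiplication μₙ, fix e ∈ G with querelement ē, and let g ∗ h := μₙ[g, e^{n−3}, ē, h] be the associated binary group with identity e. Let q ≥ 1 be an integer with ℓ_φ(q) := (q(n−2)+1)/(n−1) a positive integer, and define φ_q(g) as the ℓ_φ(q)-fold iterated μₙ-product of (e, g, followed by q copies of the polyadic inverse e⁻¹ = (e^{n−3}, ē)). Then φ_q is an a-quasi-endomorphism of ⟨G, ∗, e⟩ with a = φ_q(e): for all g, h ∈ G, φ_q(g) ∗ φ_q(h) = φ_q(g ∗ φ_q(e) ∗ h). -/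
theorem iterMu_succ {G : Type*} (μ : List G → G) (n ℓ : ℕ) (l : List G) :
    iterMu μ n (ℓ+1) l = iterMu μ n ℓ (μ (l.take n) :: l.drop n) := rfl

theorem contract {G : Type*} {n : ℕ} (hn : 3 ≤ n) {μ : List G → G} (hassoc : TotAssoc n μ) :
    ∀ ℓ (p c s : List G), c.length = n → p.length + s.length = ℓ * (n-1) →
      iterMu μ n (ℓ+1) (p ++ c ++ s) = iterMu μ n ℓ (p ++ μ c :: s) := by
  intro ℓ
  induction ℓ with
  | zero =>
    intro p c s hc hlen
    have hp : p = [] := List.eq_nil_of_length_eq_zero (by omega)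
    have hs : s = [] := List.eq_nil_of_length_eq_zero (by omega)
    subst hp hs
    simp only [List.nil_append, List.append_nil, iterMu_succ]
    rw [List.take_of_length_le (le_of_eq hc), List.drop_eq_nil_of_le (le_of_eq hc)]
  | succ m ih =>
    intro p c s hc hlen
    have hmul : (m+1)*(n-1) = m*(n-1) + (n-1) := by ring
    rcases le_or_gt n p.length with hnp | hnp
    · have hpt : (p.take n).length = n := by rw [List.length_take]; omega
      have e1 : p ++ c ++ s = p.take n ++ (p.drop n ++ (c ++ s)) := by
        rw [← List.append_assoc, List.take_append_drop, List.append_assoc]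
      have e2 : p ++ μ c :: s = p.take n ++ (p.drop n ++ μ c :: s) := by
        rw [← List.append_assoc, List.take_append_drop]
      rw [e1, iterMu_succ, List.take_left' hpt, List.drop_left' hpt,
          e2, iterMu_succ (l := p.take n ++ (p.drop n ++ μ c :: s)),
          List.take_left' hpt, List.drop_left' hpt]
      have := ih (μ (p.take n) :: p.drop n) c s hc
        (by simp only [List.length_cons, List.length_drop]; omega)
      simpa [List.append_assoc] using this
    · rcases Nat.eq_zero_or_pos p.length with hp0 | hp0
      · have hp : p = [] := List.eq_nil_of_length_eq_zero hp0
        subst hp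
        simp only [List.nil_append, iterMu_succ]
        rw [List.take_left' hc, List.drop_left' hc]
      · have hsle : n - p.length - 1 ≤ s.length := by omega
        have hc1 : (c.take (n - p.length)).length = n - p.length := by
          rw [List.length_take]; omega
        have hc2 : (c.drop (n - p.length)).length = n - (n - p.length) := by
          rw [List.length_drop, hc]
        have hs1 : (s.take (n - p.length - 1)).length = n - p.length - 1 := by
          rw [List.length_take]; omega
        have hcc : c.take (n - p.length) ++ c.drop (n - p.length) = c :=
          List.take_append_drop _ _
        have hss : s.take (n - p.length - 1) ++ s.drop (n - p.length - 1) = s :=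
          List.take_append_drop _ _
        have hpc1 : (p ++ c.take (n - p.length)).length = n := by
          simp only [List.length_append, hc1]; omega
        have e1 : p ++ c ++ s = (p ++ c.take (n - p.length)) ++ (c.drop (n - p.length) ++ s) := by
          rw [List.append_assoc p, List.append_assoc p,
            ← List.append_assoc (c.take (n - p.length)), hcc]
        rw [e1, iterMu_succ, List.take_left' hpc1, List.drop_left' hpc1]
        have hblk : (μ (p ++ c.take (n - p.length)) ::
            (c.drop (n - p.length) ++ s.take (n - p.length - 1))).length = n := by
          simp only [List.length_cons, List.length_append, hc2, hs1]; omega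
        have e3 : μ (p ++ c.take (n - p.length)) :: (c.drop (n - p.length) ++ s)
            = (μ (p ++ c.take (n - p.length)) ::
                (c.drop (n - p.length) ++ s.take (n - p.length - 1))) ++ s.drop (n - p.length - 1) := by
          rw [← hss]; simp [List.append_assoc]
        rw [e3, iterMu_succ, List.take_left' hblk, List.drop_left' hblk]
        have hrb : (p ++ μ c :: s.take (n - p.length - 1)).length = n := by
          simp only [List.length_append, List.length_cons, hs1]; omega
        have e4 : p ++ μ c :: s = (p ++ μ c :: s.take (n - p.length - 1)) ++ s.drop (n - p.length - 1) := by
          rw [← hss]; simp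
        rw [e4, iterMu_succ (l := (p ++ μ c :: s.take (n - p.length - 1)) ++ s.drop (n - p.length - 1)),
          List.take_left' hrb, List.drop_left' hrb]
        have hμ : μ (μ (p ++ c.take (n - p.length)) ::
              (c.drop (n - p.length) ++ s.take (n - p.length - 1)))
            = μ (p ++ μ c :: s.take (n - p.length - 1)) := by
          have := hassoc [] (p ++ c.take (n - p.length))
            (c.drop (n - p.length) ++ s.take (n - p.length - 1)) p c (s.take (n - p.length - 1))
            hpc1 hc
            (by simp only [List.length_nil, List.length_append, hc2, hs1]; omega)
            (by simp only [List.length_take]; omega)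
            (by simp only [List.nil_append]
                rw [List.append_assoc p, List.append_assoc p,
                  ← List.append_assoc (c.take (n - p.length)), hcc])
          simpa using this
        rw [hμ]

theorem expand {G : Type*} {n : ℕ} (hn : 3 ≤ n) {μ : List G → G} (hassoc : TotAssoc n μ) :
    ∀ ℓ₁ ℓ₂ (p L s : List G), L.length = ℓ₁ * (n-1) + 1 → p.length + s.length = ℓ₂ * (n-1) →
      iterMu μ n (ℓ₁ + ℓ₂) (p ++ L ++ s) = iterMu μ n ℓ₂ (p ++ iterMu μ n ℓ₁ L :: s) := by
  intro ℓ₁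
  induction ℓ₁ with
  | zero =>
    intro ℓ₂ p L s hL hps
    have h1 : L.length = 1 := by simpa using hL
    obtain ⟨a, rfl⟩ := List.length_eq_one_iff.mp h1
    simp only [Nat.zero_add]
    have e0 : p ++ [a] ++ s = p ++ a :: s := by simp
    rw [e0]
    rfl
  | succ k ih =>
    intro ℓ₂ p L s hL hps
    have hmul : (k+1)*(n-1) = k*(n-1) + (n-1) := by ring
    have hmul2 : (k+ℓ₂)*(n-1) = k*(n-1) + ℓ₂*(n-1) := by ring
    have hLn : (L.take n).length = n := by rw [List.length_take]; omega
    have e1 : p ++ L ++ s = p ++ L.take n ++ (L.drop n ++ s) := by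
      rw [List.append_assoc p, List.append_assoc p,
        ← List.append_assoc (L.take n), List.take_append_drop]
    have harith : k + 1 + ℓ₂ = (k + ℓ₂) + 1 := by omega
    rw [e1, harith, contract hn hassoc (k + ℓ₂) p (L.take n) (L.drop n ++ s) hLn
      (by simp only [List.length_append, List.length_drop]; omega)]
    have e2 : p ++ μ (L.take n) :: (L.drop n ++ s) = p ++ (μ (L.take n) :: L.drop n) ++ s := by
      simp
    rw [e2, ih ℓ₂ p (μ (L.take n) :: L.drop n) s
      (by simp only [List.length_cons, List.length_drop]; omega) hps]
    rfl

theorem delete {G : Type*} {n : ℕ} (hn : 3 ≤ n) {μ : List G → G} (hassoc : TotAssoc n μ)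
    (N : List G) (hNlen : N.length = n - 1) (hN : ∀ x, μ (N ++ [x]) = x) :
    ∀ ℓ (p t : List G), t ≠ [] → p.length + t.length = ℓ * (n-1) + 1 →
      iterMu μ n (ℓ+1) (p ++ N ++ t) = iterMu μ n ℓ (p ++ t) := by
  intro ℓ p t ht hlen
  rcases t with _ | ⟨y, s⟩
  · exact absurd rfl ht
  · have e1 : p ++ N ++ (y :: s) = p ++ (N ++ [y]) ++ s := by
      simp
    rw [e1, contract hn hassoc ℓ p (N ++ [y]) s
      (by simp only [List.length_append, hNlen, List.length_cons, List.length_nil]; omega)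
      (by simp at hlen ⊢; omega), hN y]

theorem mu_eq_iterMu_one {G : Type*} {n : ℕ} (μ : List G → G) (l : List G)
    (hl : l.length = n) : iterMu μ n 1 l = μ l := by
  rw [iterMu_succ, List.take_of_length_le (le_of_eq hl), List.drop_eq_nil_of_le (le_of_eq hl)]
  rfl

theorem rep_merge {G : Type*} (e : G) (j k : ℕ) (t : List G) :
    List.replicate j e ++ (List.replicate k e ++ t) = List.replicate (j+k) e ++ t := by
  rw [← List.append_assoc, ← List.replicate_add]

theorem R1 {G : Type*} {n : ℕ} (hn : 3 ≤ n) {μ : List G → G} (hassoc : TotAssoc n μ)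
    (hsolv : UniqSolv n μ) (e ebar : G)
    (hebar : μ (List.replicate (n - 1) e ++ [ebar]) = e) :
    ∀ x, μ (x :: (List.replicate (n-2) e ++ [ebar])) = x := by
  intro x
  obtain ⟨z, hz, -⟩ := hsolv (List.replicate (n-1) e) x (by simp) 0 (by omega)
  simp only [List.take_zero, List.drop_zero, List.nil_append] at hz
  have ha := hassoc [] (z :: List.replicate (n-1) e) (List.replicate (n-2) e ++ [ebar])
    (z :: List.replicate (n-2) e) (List.replicate (n-1) e ++ [ebar]) []
    (by simp; omega) (by simp; omega) (by simp; omega) (by simp; omega)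
    (by simp only [List.nil_append, List.append_nil, List.cons_append]
        rw [rep_merge, rep_merge, Nat.add_comm])
  rw [hz, hebar] at ha
  simp only [List.nil_append, List.append_nil] at ha
  rw [ha]
  have : List.replicate (n-2) e ++ [e] = List.replicate (n-1) e := by
    rw [← List.replicate_succ']
    congr 1
    omega
  rw [List.cons_append, this, hz]

theorem LP {G : Type*} {n : ℕ} (hn : 3 ≤ n) {μ : List G → G} (hassoc : TotAssoc n μ)
    (hsolv : UniqSolv n μ) (e ebar : G)
    (hebar : μ (List.replicate (n - 1) e ++ [ebar]) = e) (i j : ℕ) (hij : i + j = n - 2) :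
    ∀ x, μ ((List.replicate i e ++ [ebar] ++ List.replicate j e) ++ [x]) = x := by
  have ebb : μ (ebar :: (List.replicate (n-2) e ++ [ebar])) = ebar :=
    R1 hn hassoc hsolv e ebar hebar ebar
  intro x
  set P : List G := List.replicate i e ++ [ebar] ++ List.replicate j e with hP
  have hPlen : P.length = n - 1 := by simp [hP]; omega
  have ha := hassoc (List.replicate i e)
    ([ebar] ++ List.replicate j e ++ List.replicate i e ++ [ebar])
    (List.replicate j e ++ [x]) P (P ++ [x]) []
    (by simp; omega) (by simp [hP]; omega) (by simp; omega) (by simp [hPlen])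
    (by simp only [hP, List.append_nil, List.append_assoc])
  have hc1 : μ ([ebar] ++ List.replicate j e ++ List.replicate i e ++ [ebar]) = ebar := by
    have : [ebar] ++ List.replicate j e ++ List.replicate i e ++ [ebar]
        = ebar :: (List.replicate (n-2) e ++ [ebar]) := by
      simp only [List.cons_append, List.nil_append, List.append_assoc, rep_merge]
      congr 3
      omega
    rw [this, ebb]
  rw [hc1] at ha
  -- ha : μ (replicate i e ++ ebar :: (replicate j e ++ [x])) = μ (P ++ μ (P ++ [x]) :: [])
  have hfix : μ (P ++ [μ (P ++ [x])]) = μ (P ++ [x]) := by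
    have h1 : List.replicate i e ++ ebar :: (List.replicate j e ++ [x]) = P ++ [x] := by
      simp [hP, List.append_assoc]
    rw [h1] at ha
    simpa using ha.symm
  obtain ⟨w, hw, hwu⟩ := hsolv P (μ (P ++ [x])) hPlen (n-1) le_rfl
  have htk : P.take (n-1) = P := List.take_of_length_le (le_of_eq hPlen)
  have hdr : P.drop (n-1) = [] := List.drop_eq_nil_of_le (le_of_eq hPlen)
  have e1 := hwu (μ (P ++ [x])) (by rw [htk, hdr]; simpa using hfix)
  have e2 := hwu x (by rw [htk, hdr])
  rw [e1, e2]

/-- In the setting of the q-deformed Hosszú–Gluskin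
construction, the map `φ_q` is an `a`-quasi-endomorphism of the binary group
`⟨G, ∗, e⟩` with `a = φ_q(e)`:
`φ_q(g) ∗ φ_q(h) = φ_q(g ∗ φ_q(e) ∗ h)` for all `g, h`. -/
theorem statement8 {G : Type*} (n q : ℕ) (hn : 3 ≤ n) (hq : 1 ≤ q)
    (μ : List G → G) (hassoc : TotAssoc n μ) (hsolv : UniqSolv n μ)
    (e ebar : G) (hebar : μ (List.replicate (n - 1) e ++ [ebar]) = e)
    (st : G → G → G)
    (hst : ∀ g h : G, st g h = μ (g :: (List.replicate (n - 3) e ++ [ebar, h])))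
    (lphi : ℕ) (hlphi : lphi * (n - 1) = q * (n - 2) + 1)
    (φq : G → G)
    (hφq : ∀ g : G, φq g = iterMu μ n lphi
      (e :: g :: (List.replicate q (List.replicate (n - 3) e ++ [ebar])).flatten)) :
    ∀ g h : G, st (φq g) (φq h) = φq (st (st g (φq e)) h) := by
  obtain ⟨k, rfl⟩ : ∃ k, q = k + 1 := ⟨q - 1, by omega⟩
  intro g h
  set I : List G := List.replicate (n - 3) e ++ [ebar] with hI
  set J : List G := (List.replicate (k + 1) I).flatten with hJ
  set J' : List G := (List.replicate k I).flatten with hJ'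
  have hIlen : I.length = n - 2 := by rw [hI]; simp; omega
  have hJlen : J.length = (k + 1) * (n - 2) := by rw [hJ]; simp [hIlen]
  have hJ'len : J'.length = k * (n - 2) := by rw [hJ']; simp [hIlen]
  have hJcons : J = I ++ J' := by rw [hJ, hJ', List.replicate_succ, List.flatten_cons]
  have hJsnoc : J = J' ++ I := by
    rw [hJ, hJ', List.replicate_succ', List.flatten_append]; simp
  -- ring facts for omega
  have hm1 : (lphi + 1) * (n - 1) = lphi * (n - 1) + (n - 1) := by ring
  have hm2 : (lphi + 1 + 1) * (n - 1) = lphi * (n - 1) + 2 * (n - 1) := by ring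
  have hm4 : 2 * lphi * (n - 1) = 2 * (lphi * (n - 1)) := by ring
  have hm5 : (2 * lphi + 1) * (n - 1) = 2 * (lphi * (n - 1)) + (n - 1) := by ring
  have hkk : (k + 1) * (n - 2) = k * (n - 2) + (n - 2) := by ring
  have hone : 1 * (n - 1) = n - 1 := by ring
  -- neutral polyads
  have hN1 : ∀ x, μ ((I ++ [e]) ++ [x]) = x := by
    intro x
    have := LP hn hassoc hsolv e ebar hebar (n - 3) 1 (by omega) x
    rw [hI]
    simpa using this
  have hN2 : ∀ x, μ ((e :: I) ++ [x]) = x := by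
    intro x
    have := LP hn hassoc hsolv e ebar hebar (n - 2) 0 (by omega) x
    have hrep : List.replicate (n - 2) e = e :: List.replicate (n - 3) e := by
      have h32 : n - 2 = (n - 3) + 1 := by omega
      rw [h32, List.replicate_succ]
    rw [hI]
    simp only [hrep] at this
    simpa using this
  -- LHS chain
  have L : μ (iterMu μ n lphi (e :: g :: J) ::
      (List.replicate (n - 3) e ++ [ebar, iterMu μ n lphi (e :: h :: J)]))
      = iterMu μ n (2 * lphi) ((e :: g :: J) ++ h :: J) := by
    calc μ (iterMu μ n lphi (e :: g :: J) ::
          (List.replicate (n - 3) e ++ [ebar, iterMu μ n lphi (e :: h :: J)]))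
        = μ ((iterMu μ n lphi (e :: g :: J) :: I) ++ iterMu μ n lphi (e :: h :: J) :: []) := by
          congr 1; rw [hI]; simp
      _ = iterMu μ n 1 ((iterMu μ n lphi (e :: g :: J) :: I)
            ++ iterMu μ n lphi (e :: h :: J) :: []) :=
          (mu_eq_iterMu_one μ _ (by
            simp only [List.length_append, List.length_cons, List.length_nil, hIlen]; omega)).symm
      _ = iterMu μ n (lphi + 1) ((iterMu μ n lphi (e :: g :: J) :: I) ++ (e :: h :: J) ++ []) :=
          (expand hn hassoc lphi 1 _ _ _
            (by simp only [List.length_cons, hJlen]; omega)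
            (by simp only [List.length_cons, List.length_nil, hIlen]; omega)).symm
      _ = iterMu μ n (lphi + 1)
            ([] ++ iterMu μ n lphi (e :: g :: J) :: (I ++ e :: h :: J)) := by
          congr 1; simp
      _ = iterMu μ n (lphi + (lphi + 1)) ([] ++ (e :: g :: J) ++ (I ++ e :: h :: J)) :=
          (expand hn hassoc lphi (lphi + 1) [] (e :: g :: J) (I ++ e :: h :: J)
            (by simp only [List.length_cons, hJlen]; omega)
            (by simp only [List.length_nil, List.length_append, List.length_cons,
                  hIlen, hJlen]; omega)).symm
      _ = iterMu μ n (2 * lphi + 1) ((e :: g :: J) ++ (I ++ [e]) ++ (h :: J)) := by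
          have hl : lphi + (lphi + 1) = 2 * lphi + 1 := by omega
          rw [hl]; congr 1; simp
      _ = iterMu μ n (2 * lphi) ((e :: g :: J) ++ (h :: J)) :=
          delete hn hassoc (I ++ [e])
            (by simp only [List.length_append, List.length_cons, List.length_nil, hIlen]; omega)
            hN1 (2 * lphi) (e :: g :: J) (h :: J) (by simp)
            (by simp only [List.length_cons, hJlen]; omega)
  -- RHS chain
  have R : iterMu μ n lphi (e :: μ (μ (g ::
        (List.replicate (n - 3) e ++ [ebar, iterMu μ n lphi (e :: e :: J)])) ::
        (List.replicate (n - 3) e ++ [ebar, h])) :: J)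
      = iterMu μ n (2 * lphi) ((e :: g :: J) ++ h :: J) := by
    have y1 : (g : G) :: (List.replicate (n - 3) e ++ [ebar, iterMu μ n lphi (e :: e :: J)])
        = (g :: I) ++ iterMu μ n lphi (e :: e :: J) :: [] := by
      rw [hI]; simp
    have y2 : μ ((g :: I) ++ iterMu μ n lphi (e :: e :: J) :: [])
        = iterMu μ n (lphi + 1) ((g :: I) ++ (e :: e :: J) ++ []) := by
      rw [← mu_eq_iterMu_one (n := n) μ ((g :: I) ++ iterMu μ n lphi (e :: e :: J) :: [])
        (by simp only [List.length_append, List.length_cons, List.length_nil, hIlen]; omega)]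
      exact (expand hn hassoc lphi 1 (g :: I) (e :: e :: J) []
        (by simp only [List.length_cons, hJlen]; omega)
        (by simp only [List.length_cons, List.length_nil, hIlen]; omega)).symm
    have x1 : iterMu μ n (lphi + 1) ((g :: I) ++ (e :: e :: J) ++ []) ::
          (List.replicate (n - 3) e ++ [ebar, h])
        = [] ++ iterMu μ n (lphi + 1) ((g :: I) ++ (e :: e :: J) ++ []) :: (I ++ h :: []) := by
      rw [hI]; simp
    have x2 : μ ([] ++ iterMu μ n (lphi + 1) ((g :: I) ++ (e :: e :: J) ++ []) :: (I ++ h :: []))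
        = iterMu μ n (lphi + 1 + 1) ([] ++ ((g :: I) ++ (e :: e :: J) ++ []) ++ (I ++ h :: [])) := by
      rw [← mu_eq_iterMu_one (n := n) μ
        ([] ++ iterMu μ n (lphi + 1) ((g :: I) ++ (e :: e :: J) ++ []) :: (I ++ h :: []))
        (by simp only [List.length_append, List.length_cons, List.length_nil,
              List.nil_append, hIlen]; omega)]
      exact (expand hn hassoc (lphi + 1) 1 [] ((g :: I) ++ (e :: e :: J) ++ []) (I ++ h :: [])
        (by simp only [List.length_append, List.length_cons, List.length_nil, hIlen, hJlen]; omega)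
        (by simp only [List.length_nil, List.length_append, List.length_cons, hIlen]; omega)).symm
    rw [y1, y2, x1, x2]
    calc iterMu μ n lphi (e :: iterMu μ n (lphi + 1 + 1)
            ([] ++ ((g :: I) ++ (e :: e :: J) ++ []) ++ (I ++ h :: [])) :: J)
        = iterMu μ n (lphi + 1 + 1 + lphi)
            ([e] ++ ([] ++ ((g :: I) ++ (e :: e :: J) ++ []) ++ (I ++ h :: [])) ++ J) :=
          (expand hn hassoc (lphi + 1 + 1) lphi [e]
            ([] ++ ((g :: I) ++ (e :: e :: J) ++ []) ++ (I ++ h :: [])) J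
            (by simp only [List.length_append, List.length_cons, List.length_nil,
                  List.nil_append, hIlen, hJlen]; omega)
            (by simp only [List.length_cons, List.length_nil, hJlen]; omega)).symm
      _ = iterMu μ n (2 * lphi + 1 + 1)
            ([e, g] ++ (I ++ [e]) ++ ((e :: I) ++ (J' ++ (I ++ h :: J)))) := by
          have hl : lphi + 1 + 1 + lphi = 2 * lphi + 1 + 1 := by omega
          rw [hl]; congr 1
          rw [hJcons]; simp
      _ = iterMu μ n (2 * lphi + 1) ([e, g] ++ ((e :: I) ++ (J' ++ (I ++ h :: J)))) :=
          delete hn hassoc (I ++ [e])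
            (by simp only [List.length_append, List.length_cons, List.length_nil, hIlen]; omega)
            hN1 (2 * lphi + 1) [e, g] ((e :: I) ++ (J' ++ (I ++ h :: J))) (by simp)
            (by simp only [List.length_append, List.length_cons, List.length_nil,
                  hIlen, hJlen, hJ'len]; omega)
      _ = iterMu μ n (2 * lphi + 1) ([e, g] ++ (e :: I) ++ (J' ++ (I ++ h :: J))) := by
          congr 1 <;> simp
      _ = iterMu μ n (2 * lphi) ([e, g] ++ (J' ++ (I ++ h :: J))) :=
          delete hn hassoc (e :: I)
            (by simp only [List.length_cons, hIlen]; omega)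
            hN2 (2 * lphi) [e, g] (J' ++ (I ++ h :: J)) (by simp)
            (by simp only [List.length_append, List.length_cons, List.length_nil,
                  hIlen, hJlen, hJ'len]; omega)
      _ = iterMu μ n (2 * lphi) ((e :: g :: J) ++ h :: J) := by
          congr 1
          rw [hJsnoc]; simp
  simp only [hst, hφq]
  rw [L, R]
end

section
/- Let n ≥ 3, let G be an n-ary group with multiplication μₙ, fix e ∈ G with querelement ē, and let g ∗ h := μₙ[g, e^{n−3}, ē, h] be the associated binary group with identity e. Let q ≥ 1 be an integer with ℓ_φ(q) := (q(n−2)+1)/(n−1) a positive integer, let φ_q(g) be the ℓ_φ(q)-fold iterated μₙ-product of (e, g, followed by q copies of the polyadic inverse e⁻¹), and let b_q be the iterated μₙ-product of [[n]]_q = (qⁿ−1)/(q−1) copies of e. Then b_q is a quasi-fixed point of φ_q: φ_q(b_q) = b_q ∗ φ_q(e). -/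
/-!
Total associativity lets an iterated product absorb any iterated product written inside it:
both equal the product of the flattened word. So `φ_q(b_q)` is the product of the word
`e, e^{[[n]]_q}, (e⁻¹)^q`, while `b_q ∗ φ_q(e)` is the product of
`e^{[[n]]_q}, e^{n-3}, ē, e, e, (e⁻¹)^q`. The block `e^{n-2}, ē, e` inside the latter is a
neutral polyad multiplying to `e`, and replacing it by `e` turns the second word into the first.
-/

theorem List.exists_eq_append_length_eq {α : Type*} {l : List α} {k : ℕ} (hk : k ≤ l.length) :
    ∃ l₁ l₂, l = l₁ ++ l₂ ∧ l₁.length = k :=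
  ⟨l.take k, l.drop k, (l.take_append_drop k).symm, List.length_take_of_le hk⟩

section IterMu

variable {G : Type*} {n : ℕ} {μ : List G → G}

theorem iterMu_succ_append_of_length_eq (ℓ : ℕ) {a : List G} (ha : a.length = n) (t : List G) :
    iterMu μ n (ℓ + 1) (a ++ t) = iterMu μ n ℓ (μ a :: t) := by
  simp only [iterMu, List.take_left' ha, List.drop_left' ha]

theorem iterMu_one_of_length_eq {a : List G} (ha : a.length = n) : iterMu μ n 1 a = μ a := by
  simpa [iterMu] using iterMu_succ_append_of_length_eq (μ := μ) 0 ha []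

theorem TotAssoc.iterMu_succ_append (hassoc : TotAssoc n μ) (hn : 0 < n) (ℓ : ℕ)
    {p c s : List G} (hc : c.length = n) (hps : p.length + s.length = ℓ * (n - 1)) :
    iterMu μ n (ℓ + 1) (p ++ c ++ s) = iterMu μ n ℓ (p ++ μ c :: s) := by
  induction ℓ generalizing p c s with
  | zero =>
    obtain ⟨rfl, rfl⟩ : p = [] ∧ s = [] := by simp_all
    simp only [List.nil_append, List.append_nil, iterMu_one_of_length_eq hc]
    rfl
  | succ ℓ ih =>
    by_cases hp : n ≤ p.length
    · obtain ⟨p₁, p₂, rfl, hp₁⟩ := List.exists_eq_append_length_eq hp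
      calc iterMu μ n (ℓ + 1 + 1) (p₁ ++ p₂ ++ c ++ s)
          = iterMu μ n (ℓ + 1) ((μ p₁ :: p₂) ++ c ++ s) := by
            simpa using iterMu_succ_append_of_length_eq (ℓ + 1) hp₁ (p₂ ++ c ++ s)
        _ = iterMu μ n ℓ ((μ p₁ :: p₂) ++ μ c :: s) := ih hc (by simp at hps ⊢; grind)
        _ = iterMu μ n (ℓ + 1) (p₁ ++ p₂ ++ μ c :: s) := by
            simpa using (iterMu_succ_append_of_length_eq ℓ hp₁ (p₂ ++ μ c :: s)).symm
    · obtain ⟨c₁, c₂, rfl, hc₁⟩ :=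
        List.exists_eq_append_length_eq (l := c) (k := n - p.length) (by omega)
      obtain ⟨s₁, s₂, rfl, hs₁⟩ := List.exists_eq_append_length_eq (l := s)
        (k := n - 1 - p.length) (by grind)
      have hsplit := hassoc [] (p ++ c₁) (c₂ ++ s₁) p (c₁ ++ c₂) s₁ (by simp; omega) hc
        (by simp at hc ⊢; omega) (by omega) (by simp)
      calc iterMu μ n (ℓ + 1 + 1) (p ++ (c₁ ++ c₂) ++ (s₁ ++ s₂))
          = iterMu μ n (ℓ + 1) ([] ++ (μ (p ++ c₁) :: (c₂ ++ s₁)) ++ s₂) := by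
            simpa using iterMu_succ_append_of_length_eq (ℓ + 1) (a := p ++ c₁) (by simp; omega)
              (c₂ ++ s₁ ++ s₂)
        _ = iterMu μ n ℓ (μ (p ++ μ (c₁ ++ c₂) :: s₁) :: s₂) := by
            rw [ih (by simp at hc ⊢; omega) (by simp at hps hc ⊢; grind)]
            simpa using congrArg (iterMu μ n ℓ <| · :: s₂) hsplit
        _ = iterMu μ n (ℓ + 1) (p ++ μ (c₁ ++ c₂) :: (s₁ ++ s₂)) := by
            simpa using (iterMu_succ_append_of_length_eq ℓ (a := p ++ μ (c₁ ++ c₂) :: s₁)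
              (by simp; omega) s₂).symm

theorem TotAssoc.iterMu_add_append (hassoc : TotAssoc n μ) (hn : 0 < n) (k : ℕ) {ℓ : ℕ}
    {p c s : List G} (hc : c.length = k * (n - 1) + 1) (hps : p.length + s.length = ℓ * (n - 1)) :
    iterMu μ n (ℓ + k) (p ++ c ++ s) = iterMu μ n ℓ (p ++ iterMu μ n k c :: s) := by
  induction k generalizing c with
  | zero =>
    obtain ⟨x, rfl⟩ := List.length_eq_one_iff.mp (by simpa using hc)
    simp [iterMu]
  | succ k ih =>
    obtain ⟨c₁, c₂, rfl, hc₁⟩ := List.exists_eq_append_length_eq (l := c) (k := n)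
      (by rw [hc, Nat.succ_mul]; omega)
    calc iterMu μ n (ℓ + (k + 1)) (p ++ (c₁ ++ c₂) ++ s)
        = iterMu μ n (ℓ + k + 1) (p ++ c₁ ++ (c₂ ++ s)) := by
          simp only [List.append_assoc]
          rfl
      _ = iterMu μ n (ℓ + k) (p ++ (μ c₁ :: c₂) ++ s) := by
          simpa using hassoc.iterMu_succ_append hn (ℓ + k) hc₁
            (by simp [Nat.add_mul, Nat.succ_mul] at hc hps ⊢; omega)
      _ = iterMu μ n ℓ (p ++ iterMu μ n (k + 1) (c₁ ++ c₂) :: s) := by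
          rw [ih (by simp [Nat.succ_mul] at hc ⊢; omega), iterMu_succ_append_of_length_eq k hc₁]

theorem TotAssoc.mu_replicate_querelement_self (hassoc : TotAssoc (n + 2) μ)
    (hsolv : UniqSolv (n + 2) μ) {e ebar : G}
    (hebar : μ (List.replicate (n + 1) e ++ [ebar]) = e) :
    μ (List.replicate n e ++ [ebar, e]) = e := by
  -- `μ(e^{n+1}, μ(e^n, ē, e)) = μ(e^n, μ(e^{n+1}, ē), e) = μ(e^{n+2})`,
  -- then cancel `e^{n+1}` on the left.
  have hshift := hassoc (List.replicate (n + 1) e) (List.replicate n e ++ [ebar, e]) []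
    (List.replicate n e) (List.replicate (n + 1) e ++ [ebar]) [e]
    (by simp) (by simp) (by simp) (by simp)
    (by simp only [List.append_nil, List.append_assoc, List.cons_append, List.nil_append,
      ← List.append_assoc (List.replicate _ e), ← List.replicate_add, Nat.add_comm n])
  rw [hebar] at hshift
  obtain ⟨_, -, huniq⟩ := hsolv (List.replicate (n + 1) e) (μ (List.replicate (n + 2) e))
    (by simp) (n + 1) le_rfl
  simp only [List.take_of_length_le, List.length_replicate, le_rfl, List.drop_of_length_le] at huniq
  exact (huniq _ (by simpa [List.replicate_succ'] using hshift)).trans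
    (huniq e (by simp [List.replicate_succ'])).symm

end IterMu

theorem statement9_general {G : Type*} (n q : ℕ) (hn : 3 ≤ n)
    (μ : List G → G) (hassoc : TotAssoc n μ) (hsolv : UniqSolv n μ)
    (e ebar : G) (hebar : μ (List.replicate (n - 1) e ++ [ebar]) = e)
    (st : G → G → G)
    (hst : ∀ g h : G, st g h = μ (g :: (List.replicate (n - 3) e ++ [ebar, h])))
    (lphi : ℕ) (hlphi : lphi * (n - 1) = q * (n - 2) + 1)
    (φq : G → G)
    (hφq : ∀ g : G, φq g = iterMu μ n lphi
      (e :: g :: (List.replicate q (List.replicate (n - 3) e ++ [ebar])).flatten))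
    (le : ℕ) (hle : le * (n - 1) + 1 = heine q n)
    (bq : G) (hbq : bq = iterMu μ n le (List.replicate (heine q n) e)) :
    φq bq = st bq (φq e) := by
  obtain ⟨m, rfl⟩ : ∃ m, n = m + 3 := ⟨n - 3, by omega⟩
  simp only [show m + 3 - 1 = m + 2 from rfl, show m + 3 - 2 = m + 1 from rfl,
    Nat.add_sub_cancel] at hebar hst hlphi hφq hle
  have hpos : 0 < m + 3 := by omega
  set P := List.replicate m e ++ [ebar]
  set J := (List.replicate q P).flatten
  have hJ : J.length = q * (m + 1) := by simp [J, P]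
  set E := List.replicate (le * (m + 2)) e
  replace hbq : bq = iterMu μ (m + 3) le (E ++ [e]) := by
    rw [hbq, ← hle, List.replicate_succ']
  have hφbq : φq bq = iterMu μ (m + 3) (lphi + le) ([e] ++ (E ++ [e]) ++ J) := by
    rw [hφq, hbq, hassoc.iterMu_add_append hpos le (by simp [E]) (by simp [hJ]; omega)]
    rfl
  symm
  calc st bq (φq e)
      = iterMu μ (m + 3) 1 ((bq :: P) ++ [iterMu μ (m + 3) lphi (e :: e :: J)]) := by
        rw [hst, hφq, iterMu_one_of_length_eq (by simp [P])]
        simp [P]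
    _ = iterMu μ (m + 3) (1 + lphi) ((bq :: P) ++ (e :: e :: J) ++ []) :=
        (hassoc.iterMu_add_append hpos lphi (by simp [hJ]; omega) (by simp [P])).symm
    _ = iterMu μ (m + 3) (1 + lphi + le)
          ([] ++ (E ++ [e]) ++ (List.replicate m e ++ ebar :: e :: e :: J)) := by
        rw [hbq]
        simpa [P] using (hassoc.iterMu_add_append hpos le (p := []) (c := E ++ [e])
          (s := List.replicate m e ++ ebar :: e :: e :: J) (by simp [E])
          (by simp [hJ, Nat.add_mul, hlphi]; omega)).symm
    _ = iterMu μ (m + 3) (lphi + le + 1)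
          (E ++ (List.replicate (m + 1) e ++ [ebar, e]) ++ e :: J) := by
        rw [show 1 + lphi + le = lphi + le + 1 by omega]
        simp [List.replicate_succ]
    _ = iterMu μ (m + 3) (lphi + le) (E ++ e :: e :: J) := by
        rw [hassoc.iterMu_succ_append hpos _ (by simp) (by simp [E, hJ]; grind),
          TotAssoc.mu_replicate_querelement_self (n := m + 1) hassoc hsolv hebar]
    _ = φq bq := by
        rw [hφbq, List.singleton_append, ← List.cons_append, ← List.replicate_succ,
          List.replicate_succ']
        simp [E]

/-- In the setting of the q-deformed Hosszú–Gluskin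
construction, the distinguished element `b_q` (the iterated μ-product of
`[[n]]_q` copies of `e`) is a quasi-fixed point of `φ_q`:
`φ_q(b_q) = b_q ∗ φ_q(e)`. -/
theorem statement9 {G : Type*} (n q : ℕ) (hn : 3 ≤ n) (hq : 1 ≤ q)
    (μ : List G → G) (hassoc : TotAssoc n μ) (hsolv : UniqSolv n μ)
    (e ebar : G) (hebar : μ (List.replicate (n - 1) e ++ [ebar]) = e)
    (st : G → G → G)
    (hst : ∀ g h : G, st g h = μ (g :: (List.replicate (n - 3) e ++ [ebar, h])))
    (lphi : ℕ) (hlphi : lphi * (n - 1) = q * (n - 2) + 1)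
    (φq : G → G)
    (hφq : ∀ g : G, φq g = iterMu μ n lphi
      (e :: g :: (List.replicate q (List.replicate (n - 3) e ++ [ebar])).flatten))
    (le : ℕ) (hle : le * (n - 1) + 1 = heine q n)
    (bq : G) (hbq : bq = iterMu μ n le (List.replicate (heine q n) e)) :
    φq bq = st bq (φq e) :=
  statement9_general n q hn μ hassoc hsolv e ebar hebar st hst lphi hlphi φq hφq le hle bq hbq
end

section
/- Let n ≥ 3 and let G be an n-ary group with multiplication μₙ. For g ∈ G define the querpower recursively by ḡ⟨⟨0⟩⟩ = g and ḡ⟨⟨k⟩⟩ = the querelement of ḡ⟨⟨k−1⟩⟩, and define the negative polyadic power g⟨−ℓ⟩ as the unique solution of the equation (ℓ-fold iterated μₙ-product of ℓ(n−1) copies of g followed by g⟨−ℓ⟩) = g. Then for every k ≥ 0 the querpower coincides with a deformed negative polyadic power: ḡ⟨⟨k⟩⟩ = g⟨−[[k]]_{2−n}⟩, where [[k]]_{2−n} = ((2−n)^k − 1)/((2−n) − 1). -/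
open List

-- The arity is written `N + 1` throughout, so that `N = n - 1` needs no truncated subtraction.
section GeneralizedAssociativity

variable {G : Type*} {N : ℕ} {μ : List G → G}

theorem iterMu_succ_append_s12 (m : ℕ) {p : List G} (hp : p.length = N + 1) (s : List G) :
    iterMu μ (N + 1) (m + 1) (p ++ s) = iterMu μ (N + 1) m (μ p :: s) := by
  show iterMu μ (N + 1) m (μ ((p ++ s).take (N + 1)) :: (p ++ s).drop (N + 1)) = _
  rw [take_left' hp, drop_left' hp]

theorem iterMu_one_s12 {l : List G} (hl : l.length = N + 1) : iterMu μ (N + 1) 1 l = μ l := by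
  simpa [iterMu] using iterMu_succ_append_s12 (μ := μ) 0 hl []

theorem iterMu_append_mu (hassoc : TotAssoc (N + 1) μ) (m : ℕ) {u w v : List G}
    (hw : w.length = N + 1) (huv : u.length + v.length = m * N) :
    iterMu μ (N + 1) (m + 1) (u ++ w ++ v) = iterMu μ (N + 1) m (u ++ μ w :: v) := by
  induction m generalizing u v with
  | zero =>
    obtain ⟨rfl, rfl⟩ : u = [] ∧ v = [] := by simp_all
    simpa using iterMu_succ_append_s12 0 hw []
  | succ m ih =>
    rw [Nat.succ_mul] at huv
    by_cases hu : N + 1 ≤ u.length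
    · obtain ⟨u₁, u₂, rfl, hu₁⟩ : ∃ u₁ u₂, u = u₁ ++ u₂ ∧ u₁.length = N + 1 :=
        ⟨u.take (N + 1), u.drop (N + 1), (u.take_append_drop _).symm, by simp; omega⟩
      have := @ih (μ u₁ :: u₂) v (by simp at huv ⊢; omega)
      simp only [append_assoc, cons_append] at this ⊢
      rw [iterMu_succ_append_s12 _ hu₁, iterMu_succ_append_s12 _ hu₁, this]
    · -- the first block to be multiplied starts in `u` and ends inside `w`
      obtain ⟨w₁, w₂, rfl, hw₁⟩ : ∃ w₁ w₂, w = w₁ ++ w₂ ∧ w₁.length = N + 1 - u.length :=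
        ⟨w.take (N + 1 - u.length), w.drop _, (w.take_append_drop _).symm, by simp; omega⟩
      obtain ⟨v₁, v₂, rfl, hv₁⟩ : ∃ v₁ v₂, v = v₁ ++ v₂ ∧ v₁.length = N - u.length :=
        ⟨v.take (N - u.length), v.drop _, (v.take_append_drop _).symm, by simp; omega⟩
      simp only [length_append] at hw huv
      have hblock₁ : (u ++ w₁).length = N + 1 := by simp; omega
      have hblock₂ : (μ (u ++ w₁) :: (w₂ ++ v₁)).length = N + 1 := by simp; omega
      have hblock₃ : (u ++ μ (w₁ ++ w₂) :: v₁).length = N + 1 := by simp; omega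
      calc iterMu μ (N + 1) (m + 1 + 1) (u ++ (w₁ ++ w₂) ++ (v₁ ++ v₂))
          = iterMu μ (N + 1) (m + 1 + 1) ((u ++ w₁) ++ (w₂ ++ v₁ ++ v₂)) := by simp
        _ = iterMu μ (N + 1) m (μ (μ (u ++ w₁) :: (w₂ ++ v₁)) :: v₂) := by
          rw [iterMu_succ_append_s12 _ hblock₁, ← cons_append, iterMu_succ_append_s12 _ hblock₂]
        _ = iterMu μ (N + 1) m (μ (u ++ μ (w₁ ++ w₂) :: v₁) :: v₂) := by
          have := hassoc [] (u ++ w₁) (w₂ ++ v₁) u (w₁ ++ w₂) v₁ hblock₁ (by simp; omega)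
            (by simp; omega) (by simp; omega) (by simp)
          rw [nil_append] at this
          rw [this]
        _ = iterMu μ (N + 1) (m + 1) (u ++ μ (w₁ ++ w₂) :: (v₁ ++ v₂)) := by
          rw [← iterMu_succ_append_s12 _ hblock₃]
          simp

theorem iterMu_append_iterMu (hassoc : TotAssoc (N + 1) μ) (a b : ℕ) {u w v : List G}
    (hw : w.length = b * N + 1) (huv : u.length + v.length = a * N) :
    iterMu μ (N + 1) (a + b) (u ++ w ++ v) =
      iterMu μ (N + 1) a (u ++ iterMu μ (N + 1) b w :: v) := by
  induction b generalizing w with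
  | zero =>
    obtain ⟨x, rfl⟩ : ∃ x, w = [x] := length_eq_one_iff.mp (by simpa using hw)
    simp [iterMu]
  | succ b ih =>
    obtain ⟨w₁, w₂, rfl, hw₁⟩ : ∃ w₁ w₂, w = w₁ ++ w₂ ∧ w₁.length = N + 1 :=
      ⟨w.take (N + 1), w.drop (N + 1), (w.take_append_drop _).symm, by
        simp [Nat.succ_mul] at hw ⊢; omega⟩
    simp only [length_append, Nat.succ_mul] at hw
    calc iterMu μ (N + 1) (a + b + 1) (u ++ (w₁ ++ w₂) ++ v)
        = iterMu μ (N + 1) (a + b + 1) (u ++ w₁ ++ (w₂ ++ v)) := by simp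
      _ = iterMu μ (N + 1) (a + b) (u ++ (μ w₁ :: w₂) ++ v) := by
        rw [iterMu_append_mu hassoc _ hw₁ (by simp [Nat.add_mul]; omega)]
        simp
      _ = iterMu μ (N + 1) a (u ++ iterMu μ (N + 1) (b + 1) (w₁ ++ w₂) :: v) := by
        rw [ih (by simp; omega), iterMu_succ_append_s12 _ hw₁]

end GeneralizedAssociativity

section Cancellation

variable {G : Type*} {N : ℕ} {μ : List G → G}

theorem mu_append_singleton_injective (hsolv : UniqSolv (N + 1) μ) {u : List G}
    (hu : u.length = N) : Function.Injective fun x => μ (u ++ [x]) := by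
  intro x y hxy
  have hsplit (z : G) : u.take N ++ z :: u.drop N = u ++ [z] := by simp [← hu]
  obtain ⟨z, -, huniq⟩ := hsolv u (μ (u ++ [x])) (by simpa) N (by simp)
  exact (huniq x (by simp only [hsplit])).trans
    (huniq y (by simpa only [hsplit] using hxy.symm)).symm

theorem iterMu_append_singleton_injective (hassoc : TotAssoc (N + 1) μ)
    (hsolv : UniqSolv (N + 1) μ) (hN : 0 < N) (m : ℕ) {u : List G} (hu : u.length = m * N) :
    Function.Injective fun x => iterMu μ (N + 1) m (u ++ [x]) := by
  cases m with
  | zero =>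
    obtain rfl : u = [] := by simpa using hu
    exact fun x y hxy => hxy
  | succ m =>
    -- multiply out the first `m N + 1` entries, leaving one `μ` with `x` in the last place
    obtain ⟨w, v, rfl, hw⟩ : ∃ w v, u = w ++ v ∧ w.length = m * N + 1 :=
      ⟨u.take (m * N + 1), u.drop _, (u.take_append_drop _).symm, by
        simp [Nat.succ_mul] at hu ⊢; omega⟩
    simp only [length_append, Nat.succ_mul] at hu
    have hprod (x : G) :
        iterMu μ (N + 1) (m + 1) (w ++ v ++ [x]) = μ ((iterMu μ (N + 1) m w :: v) ++ [x]) := by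
      have := iterMu_append_iterMu hassoc 1 m (u := []) (v := v ++ [x]) hw (by simp; omega)
      rw [Nat.add_comm 1 m, ← append_assoc, nil_append, nil_append,
        iterMu_one_s12 (by simp; omega)] at this
      simpa using this
    intro x y hxy
    simp only [hprod] at hxy
    exact mu_append_singleton_injective hsolv (by simp; omega) hxy

end Cancellation

section NegativePower

variable {G : Type*} {N : ℕ} {μ : List G → G} {g h : G} {a : ℕ}

theorem iterMu_replicate_cons_replicate_of_negPow (hassoc : TotAssoc (N + 1) μ)
    (hsolv : UniqSolv (N + 1) μ) (hN : 0 < N)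
    (hE : iterMu μ (N + 1) a (replicate (a * N) g ++ [h]) = g) {j : ℕ} (hj : j ≤ a * N) :
    iterMu μ (N + 1) a (replicate j g ++ h :: replicate (a * N - j) g) = g := by
  refine iterMu_append_singleton_injective hassoc hsolv hN a (u := replicate (a * N) g)
    length_replicate ?_
  -- evaluate `g^(aN) g^j h g^(aN - j)` by grouping either the last or the first `aN + 1` entries
  have hfirst := iterMu_append_iterMu hassoc a a (u := replicate (a * N) g) (v := [])
    (w := replicate j g ++ h :: replicate (a * N - j) g) (by simp; omega) (by simp)
  have hlast := iterMu_append_iterMu hassoc a a (u := replicate j g)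
    (v := replicate (a * N - j) g) (w := replicate (a * N) g ++ [h]) (by simp) (by simp; omega)
  have hlists : replicate (a * N) g ++ (replicate j g ++ h :: replicate (a * N - j) g) ++ [] =
      replicate j g ++ (replicate (a * N) g ++ [h]) ++ replicate (a * N - j) g := by
    simp only [append_nil, append_assoc, singleton_append]
    rw [← append_assoc, replicate_append_replicate, ← append_assoc, replicate_append_replicate,
      Nat.add_comm]
  have hg : replicate j g ++ g :: replicate (a * N - j) g = replicate (a * N) g ++ [g] := by
    rw [← replicate_succ', eq_replicate_iff]
    simp only [length_append, length_replicate, length_cons, mem_append, mem_replicate, mem_cons]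
    exact ⟨by omega, by rintro b (⟨-, rfl⟩ | rfl | ⟨-, rfl⟩) <;> rfl⟩
  simp only
  rw [← hfirst, hlists, hlast, hE, hg]

theorem iterMu_cons_replicate_replicate_of_negPow (hassoc : TotAssoc (N + 1) μ)
    (hsolv : UniqSolv (N + 1) μ) (haN : 2 ≤ a * N)
    (hE : iterMu μ (N + 1) a (replicate (a * N) g ++ [h]) = g) {t : ℕ} (ht : 1 ≤ t) :
    iterMu μ (N + 1) (t * a) (g :: replicate t h ++ replicate (t * (a * N - 1)) g) = g := by
  have hN : 0 < N := Nat.pos_of_ne_zero (by rintro rfl; simp at haN)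
  induction t, ht using Nat.le_induction with
  | base =>
    simpa using iterMu_replicate_cons_replicate_of_negPow hassoc hsolv hN hE (j := 1) (by omega)
  | succ t ht ih =>
    -- the last `h` together with the `aN` copies of `g` after it multiplies to `g`
    have htX : 0 < t * (a * N - 1) := Nat.mul_pos (by omega) (by omega)
    have hcount : (t + 1) * (a * N - 1) = a * N + (t * (a * N - 1) - 1) := by
      rw [Nat.succ_mul]; omega
    have hlen : t * (a * N - 1) + t = (t * a) * N := by
      rw [Nat.mul_sub_one, Nat.mul_assoc]
      have : t ≤ t * (a * N) := Nat.le_mul_of_pos_right t (by omega)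
      omega
    have hblock := iterMu_replicate_cons_replicate_of_negPow hassoc hsolv hN hE (j := 0) (by omega)
    rw [replicate_zero, nil_append, Nat.sub_zero] at hblock
    calc iterMu μ (N + 1) ((t + 1) * a)
          (g :: replicate (t + 1) h ++ replicate ((t + 1) * (a * N - 1)) g)
        = iterMu μ (N + 1) (t * a + a) ((g :: replicate t h) ++
            (h :: replicate (a * N) g) ++ replicate (t * (a * N - 1) - 1) g) := by
          rw [Nat.succ_mul, hcount, replicate_succ', ← replicate_append_replicate]
          simp
      _ = iterMu μ (N + 1) (t * a)
            (g :: replicate t h ++ g :: replicate (t * (a * N - 1) - 1) g) := by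
          rw [iterMu_append_iterMu hassoc _ _ (by simp) (by simp; omega), hblock]
      _ = g := by
          rw [← replicate_succ, Nat.sub_add_cancel htX]
          exact ih

end NegativePower

section Querelement

variable {G : Type*} {N : ℕ} {μ : List G → G} {g h : G}

theorem iterMu_append_replicate_of_posPow (hassoc : TotAssoc (N + 1) μ) {b : ℕ}
    (hP : iterMu μ (N + 1) b (replicate (b * N + 1) g) = h) (t : ℕ) {a : ℕ} {u v : List G}
    (huv : u.length + v.length + t = a * N + 1) :
    iterMu μ (N + 1) (a + t * b) (u ++ replicate (t * (b * N + 1)) g ++ v) =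
      iterMu μ (N + 1) a (u ++ replicate t h ++ v) := by
  induction t generalizing v with
  | zero => simp
  | succ t ih =>
    have hlen : t * (b * N + 1) = t * b * N + t := by rw [Nat.mul_succ, Nat.mul_assoc]
    calc iterMu μ (N + 1) (a + (t + 1) * b) (u ++ replicate ((t + 1) * (b * N + 1)) g ++ v)
        = iterMu μ (N + 1) (a + t * b + b)
            ((u ++ replicate (t * (b * N + 1)) g) ++ replicate (b * N + 1) g ++ v) := by
          rw [Nat.succ_mul, Nat.succ_mul, ← replicate_append_replicate, Nat.add_assoc]
          simp only [append_assoc]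
      _ = iterMu μ (N + 1) (a + t * b) (u ++ replicate (t * (b * N + 1)) g ++ h :: v) := by
          rw [iterMu_append_iterMu hassoc _ _ (by simp) (by simp [Nat.add_mul]; omega), hP]
      _ = iterMu μ (N + 1) a (u ++ replicate t h ++ h :: v) := ih (by simp; omega)
      _ = iterMu μ (N + 1) a (u ++ replicate (t + 1) h ++ v) := by
          rw [replicate_succ']
          simp

theorem iterMu_replicate_append_querelement_of_posPow (hassoc : TotAssoc (N + 1) μ)
    (hsolv : UniqSolv (N + 1) μ) (hN : 0 < N) {b : ℕ} {x : G}
    (hP : iterMu μ (N + 1) b (replicate (b * N + 1) g) = h)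
    (hx : μ (replicate N h ++ [x]) = h) :
    iterMu μ (N + 1) ((N - 1) * b + 1) (replicate (((N - 1) * b + 1) * N) g ++ [x]) = g := by
  have hcount : 1 + N * b = b + ((N - 1) * b + 1) := by
    zify [hN]
    ring
  have hlen : N * (b * N + 1) = b * N + ((N - 1) * b + 1) * N := by
    zify [hN]
    ring
  -- replace each of the `N` copies of `h = g⟨b⟩` in `μ(h, …, h, x) = h` by its `b N + 1` factors
  have hexpand := iterMu_append_replicate_of_posPow hassoc hP N (a := 1) (u := []) (v := [x])
    (by simp; omega)
  rw [nil_append, nil_append, iterMu_one_s12 (by simp), hx, hcount, hlen,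
    ← replicate_append_replicate, append_assoc] at hexpand
  have hgroup := iterMu_append_iterMu hassoc b ((N - 1) * b + 1) (u := replicate (b * N) g)
    (w := replicate (((N - 1) * b + 1) * N) g ++ [x]) (v := []) (by simp) (by simp)
  rw [append_nil, hexpand] at hgroup
  refine iterMu_append_singleton_injective hassoc hsolv hN b (u := replicate (b * N) g)
    length_replicate ?_
  simp only
  rw [← hgroup, ← hP, replicate_succ']

theorem mu_replicate_append_posPow_of_negPow (hassoc : TotAssoc (N + 1) μ)
    (hsolv : UniqSolv (N + 1) μ) (hN : 2 ≤ N) {a : ℕ} (ha : 0 < a)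
    (hE : iterMu μ (N + 1) a (replicate (a * N) g ++ [h]) = g) :
    μ (replicate N h ++
      [iterMu μ (N + 1) ((N - 1) * a - 1) (replicate (((N - 1) * a - 1) * N + 1) g)]) = h := by
  have haN : 2 ≤ a * N := le_trans hN (Nat.le_mul_of_pos_left N ha)
  obtain ⟨c, hc⟩ : ∃ c, (N - 1) * a = c + 1 :=
    Nat.exists_eq_add_one.mpr (Nat.mul_pos (by omega) ha)
  rw [hc, Nat.add_sub_cancel]
  have hlen : (N - 1) * (a * N - 1) = c * N + 1 := by
    zify [(by omega : 1 ≤ a * N), (by omega : 1 ≤ N)] at hc ⊢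
    linear_combination (N : ℤ) * hc
  refine iterMu_append_singleton_injective hassoc hsolv (by omega) a (u := replicate (a * N) g)
    length_replicate ?_
  simp only
  rw [hE]
  calc iterMu μ (N + 1) a (replicate (a * N) g ++
        [μ (replicate N h ++ [iterMu μ (N + 1) c (replicate (c * N + 1) g)])])
      = iterMu μ (N + 1) (a + 1 + c) (replicate (a * N) g ++ replicate N h ++
          replicate (c * N + 1) g) := by
        have hY := iterMu_append_iterMu hassoc (a + 1) c
          (u := replicate (a * N) g ++ replicate N h) (w := replicate (c * N + 1) g) (v := [])
          (by simp) (by simp [Nat.succ_mul])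
        have hμ := iterMu_append_mu hassoc a (u := replicate (a * N) g)
          (w := replicate N h ++ [iterMu μ (N + 1) c (replicate (c * N + 1) g)]) (v := [])
          (by simp) (by simp)
        rw [append_nil] at hY
        rw [hY, ← hμ]
        simp
    _ = iterMu μ (N + 1) (c + 1 + a) ([] ++ (replicate (a * N) g ++ [h]) ++
          (replicate (N - 1) h ++ replicate (c * N + 1) g)) := by
        have hsplit : replicate N h = h :: replicate (N - 1) h := by
          rw [← replicate_succ, Nat.sub_add_cancel (by omega)]
        rw [show a + 1 + c = c + 1 + a by omega, hsplit]
        simp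
    _ = g := by
        rw [iterMu_append_iterMu hassoc _ _ (by simp) (by simp [Nat.succ_mul]; omega), hE,
          nil_append, ← hc, ← hlen]
        exact iterMu_cons_replicate_replicate_of_negPow hassoc hsolv haN hE (by omega)

end Querelement

section PolyadicPower

variable {G : Type*} {N : ℕ} {μ : List G → G}

/-- `IsPolyPow μ N g x e` says that `x = g⟨e⟩` for the `(N + 1)`-ary operation `μ`; a negative
power is specified by its defining equation. -/
def IsPolyPow (μ : List G → G) (N : ℕ) (g x : G) : ℤ → Prop
  | .ofNat m => x = iterMu μ (N + 1) m (replicate (m * N + 1) g)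
  | .negSucc m => iterMu μ (N + 1) (m + 1) (replicate ((m + 1) * N) g ++ [x]) = g

theorem IsPolyPow.iterMu_replicate_append {g x : G} {m : ℕ} (hx : IsPolyPow μ N g x (-m)) :
    iterMu μ (N + 1) m (replicate (m * N) g ++ [x]) = g := by
  cases m with
  | zero => simpa [IsPolyPow, iterMu] using hx
  | succ m => exact hx

theorem IsPolyPow.querelement (hassoc : TotAssoc (N + 1) μ) (hsolv : UniqSolv (N + 1) μ)
    (hN : 2 ≤ N) {g x y : G} {e : ℤ} (hx : IsPolyPow μ N g x e)
    (hy : μ (replicate N x ++ [y]) = x) : IsPolyPow μ N g y ((1 - N) * e - 1) := by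
  cases e with
  | ofNat b =>
    have he : (1 - N : ℤ) * .ofNat b - 1 = .negSucc ((N - 1) * b) := by
      rw [Int.negSucc_eq, Int.ofNat_eq_natCast]
      push_cast [Nat.cast_sub (by omega : 1 ≤ N)]
      ring
    rw [he]
    exact iterMu_replicate_append_querelement_of_posPow hassoc hsolv (by omega) hx.symm hy
  | negSucc m =>
    have he : (1 - N : ℤ) * .negSucc m - 1 = .ofNat ((N - 1) * (m + 1) - 1) := by
      have : 1 ≤ (N - 1) * (m + 1) := Nat.mul_pos (by omega) m.succ_pos
      rw [Int.negSucc_eq, Int.ofNat_eq_natCast]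
      push_cast [Nat.cast_sub this, Nat.cast_sub (by omega : 1 ≤ N)]
      ring
    rw [he]
    exact mu_append_singleton_injective hsolv length_replicate
      (hy.trans (mu_replicate_append_posPow_of_negPow hassoc hsolv hN m.succ_pos hx).symm)

end PolyadicPower

/-- On an `n`-ary group (`n ≥ 3`) with querelement map `bar`,
the `k`-th querpower `ḡ⟨⟨k⟩⟩ = bar^[k] g` coincides with the deformed negative
polyadic power `g⟨-ℓ⟩` where `ℓ = [[k]]_{2-n} = ((2-n)^k - 1)/((2-n)-1)`: if
`ℓ = m ≥ 0` then `bar^[k] g` solves the defining equation of `g⟨-m⟩` (the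
`m`-fold iterated μ-product of `m(n-1)` copies of `g` followed by it equals
`g`), and if `ℓ = -m ≤ 0` then `bar^[k] g` equals the positive polyadic power
`g⟨m⟩` (the `m`-fold iterated μ-product of `m(n-1)+1` copies of `g`). -/
theorem statement12 {G : Type*} (n : ℕ) (hn : 3 ≤ n)
    (μ : List G → G) (hassoc : TotAssoc n μ) (hsolv : UniqSolv n μ)
    (bar : G → G)
    (hbar : ∀ g : G, μ (List.replicate (n - 1) g ++ [bar g]) = g)
    (g : G) (k : ℕ) (ℓ : ℤ)
    (hℓ : ℓ = ((2 - (n : ℤ)) ^ k - 1) / ((2 - (n : ℤ)) - 1)) :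
    (∀ m : ℕ, ℓ = (m : ℤ) →
      iterMu μ n m (List.replicate (m * (n - 1)) g ++ [bar^[k] g]) = g) ∧
    (∀ m : ℕ, ℓ = -(m : ℤ) →
      bar^[k] g = iterMu μ n m (List.replicate (m * (n - 1) + 1) g)) := by
  obtain ⟨N, rfl⟩ : ∃ N, n = N + 1 := ⟨n - 1, by omega⟩
  simp only [Nat.add_sub_cancel] at hbar ⊢
  have hq : (2 : ℤ) - ((N + 1 : ℕ) : ℤ) = 1 - N := by push_cast; ring
  rw [hq] at hℓ
  have hheine : ℓ = ∑ i ∈ Finset.range k, (1 - N : ℤ) ^ i := by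
    rw [hℓ, ← geom_sum_mul, Int.mul_ediv_cancel _ (by omega)]
  have hpow (k : ℕ) : IsPolyPow μ N g (bar^[k] g) (-∑ i ∈ Finset.range k, (1 - N : ℤ) ^ i) := by
    induction k with
    | zero => exact (rfl : g = g)
    | succ k ih =>
      rw [Function.iterate_succ_apply', geom_sum_succ,
        show -((1 - N : ℤ) * ∑ i ∈ Finset.range k, (1 - N : ℤ) ^ i + 1) =
          (1 - N) * -∑ i ∈ Finset.range k, (1 - N : ℤ) ^ i - 1 by ring]
      exact ih.querelement hassoc hsolv (by omega) (hbar _)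
  refine ⟨fun m hm => IsPolyPow.iterMu_replicate_append ?_, fun m hm => ?_⟩
  · rw [← hm, hheine]
    exact hpow k
  · have hx : IsPolyPow μ N g (bar^[k] g) m := by
      rw [← neg_neg (m : ℤ), ← hm, hheine]
      exact hpow k
    exact hx
end

section
/- Let n ≥ 2, ħ ∈ ℂ with ħ ≠ 0, and define the n-ary q-addition on ℂ by μₙ[g₁,…,gₙ] = (g₁ + ⋯ + gₙ) + ħ·(g₁⋯gₙ). Define polyadic powers of g by g⟨0⟩ = g and g⟨k⟩ = μₙ[g,…,g,g⟨k−1⟩] (with n−1 copies of g). Then for every g ≠ 0 and k ≥ 0: g⟨k⟩ = g·(1 + ((n−1)/ħ)·g^{1−n})·(1 + ħ·g^{n−1})^k − ((n−1)/ħ)·g^{2−n}; in particular the recurrence g⟨k⟩ = (n−1)g + (1 + ħ g^{n−1})·g⟨k−1⟩ holds for all g ∈ ℂ. -/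
/-- For the `n`-ary q-addition
`μₙ[g₁,…,gₙ] = Σᵢ gᵢ + ℏ·Πᵢ gᵢ` on `ℂ` (`ℏ ≠ 0`), the polyadic powers
`g⟨0⟩ = g`, `g⟨k⟩ = μₙ[g^{n-1}, g⟨k-1⟩]` satisfy the closed formula
`g⟨k⟩ = g(1 + ((n-1)/ℏ)g^{1-n})(1 + ℏg^{n-1})^k − ((n-1)/ℏ)g^{2-n}` for
`g ≠ 0`, and the recurrence
`g⟨k⟩ = (n-1)g + (1 + ℏg^{n-1})g⟨k-1⟩` for all `g`. -/
theorem statement14 (n : ℕ) (hn : 2 ≤ n) (ℏ : ℂ) (hℏ : ℏ ≠ 0)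
    (μ : List ℂ → ℂ) (hμ : ∀ l : List ℂ, μ l = l.sum + ℏ * l.prod)
    (p : ℂ → ℕ → ℂ) (hp0 : ∀ g : ℂ, p g 0 = g)
    (hpS : ∀ (g : ℂ) (k : ℕ), p g (k + 1) = μ (List.replicate (n - 1) g ++ [p g k])) :
    (∀ g : ℂ, g ≠ 0 → ∀ k : ℕ,
      p g k = g * (1 + (((n : ℂ) - 1) / ℏ) * g ^ (1 - (n : ℤ))) *
          (1 + ℏ * g ^ (n - 1)) ^ k
        - (((n : ℂ) - 1) / ℏ) * g ^ (2 - (n : ℤ))) ∧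
    (∀ (g : ℂ) (k : ℕ),
      p g (k + 1) = ((n : ℂ) - 1) * g + (1 + ℏ * g ^ (n - 1)) * p g k) := by
  have hn1 : ((n - 1 : ℕ) : ℂ) = (n : ℂ) - 1 := by
    have : (1 : ℕ) ≤ n := le_trans (by norm_num) hn
    push_cast [this]; ring
  have hrec : ∀ (g : ℂ) (k : ℕ),
      p g (k + 1) = ((n : ℂ) - 1) * g + (1 + ℏ * g ^ (n - 1)) * p g k := by
    intro g k
    rw [hpS, hμ]
    simp [List.sum_append, List.prod_append, List.sum_replicate, List.prod_replicate,
      nsmul_eq_mul, hn1]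
    ring
  refine ⟨fun g hg k => ?_, hrec⟩
  have hA : g ^ (n - 1) ≠ 0 := pow_ne_zero _ hg
  have e1 : g ^ (1 - (n : ℤ)) = (g ^ (n - 1))⁻¹ := by
    have : (1 - (n : ℤ)) = -((n - 1 : ℕ) : ℤ) := by omega
    rw [this, zpow_neg, zpow_natCast]
  have e2 : g ^ (2 - (n : ℤ)) = g * (g ^ (n - 1))⁻¹ := by
    have : (2 - (n : ℤ)) = 1 + -((n - 1 : ℕ) : ℤ) := by omega
    rw [this, zpow_add₀ hg, zpow_neg, zpow_natCast, zpow_one]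
  rw [e1, e2]
  induction k with
  | zero =>
    rw [hp0, pow_zero]
    field_simp
    ring
  | succ k ih =>
    rw [hrec, ih, pow_succ]
    field_simp
    ring
end

section
/- Let n ≥ 2, ħ ∈ ℂ with ħ ≠ 0, and define the n-ary q-addition on ℂ by μₙ[g₁,…,gₙ] = (g₁ + ⋯ + gₙ) + ħ·(g₁⋯gₙ). Then for every g ∈ ℂ with 1 + ħ·g^{n−1} ≠ 0, the element ḡ := −(n−2)·g/(1 + ħ·g^{n−1}) satisfies the querelement equation μₙ[g,…,g,ḡ] = g (with n−1 copies of g). -/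
/-- For the `n`-ary q-addition
`μₙ[g₁,…,gₙ] = Σᵢ gᵢ + ℏ·Πᵢ gᵢ` on `ℂ` (`ℏ ≠ 0`) and any `g` with
`1 + ℏg^{n-1} ≠ 0`, the element `ḡ = −(n−2)g/(1 + ℏg^{n-1})` satisfies the
querelement equation `μₙ[g^{n-1}, ḡ] = g`. -/
theorem statement15 (n : ℕ) (hn : 2 ≤ n) (ℏ : ℂ) (hℏ : ℏ ≠ 0)
    (μ : List ℂ → ℂ) (hμ : ∀ l : List ℂ, μ l = l.sum + ℏ * l.prod)
    (g : ℂ) (hg : 1 + ℏ * g ^ (n - 1) ≠ 0) :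
    μ (List.replicate (n - 1) g ++
        [-(((n : ℂ) - 2) * g) / (1 + ℏ * g ^ (n - 1))]) = g := by
  rw [hμ]
  simp only [List.sum_append, List.prod_append, List.sum_replicate,
    List.prod_replicate, List.sum_cons, List.prod_cons, List.sum_nil,
    List.prod_nil, smul_eq_mul, mul_one, add_zero]
  have h1 : ((n - 1 : ℕ) : ℂ) = (n : ℂ) - 1 := by
    push_cast [Nat.cast_sub (by omega : 1 ≤ n)]; ring
  rw [nsmul_eq_mul, h1]
  field_simp
  ring
end

section
/- Define the ternary copula operation on the open interval G = (0,1) ⊂ ℝ by μ₃[g,h,u] := g(1−h)u / (g(1−h)u + (1−g)h(1−u)). Then: (i) μ₃ maps G³ into G; (ii) μ₃ is totally associative: μ₃[μ₃[g,h,u],v,w] = μ₃[g,μ₃[h,u,v],w] = μ₃[g,h,μ₃[u,v,w]] for all g,h,u,v,w ∈ G; (iii) every element is idempotent: μ₃[g,g,g] = g, so the querelement of g is g itself; and (iv) for any fixed e ∈ G, the map φ(g) := μ₃[e,g,e] satisfies φ(φ(g)) = g for all g ∈ G. -/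
/-!
The odds map `x ↦ x / (1 - x)` is injective on `(0,1)` and turns the copula into the heap
operation `(a, b, c) ↦ a b⁻¹ c` of the multiplicative group of positive reals:
`odds μ₃[g,h,u] = odds g / odds h * odds u`. Total associativity, idempotence and the
involution `φ ∘ φ = id` are then identities of commutative groups.
-/

open Set

namespace Copula

noncomputable def copula (g h u : ℝ) : ℝ :=
  g * (1 - h) * u / (g * (1 - h) * u + (1 - g) * h * (1 - u))

noncomputable def odds (x : ℝ) : ℝ := x / (1 - x)

variable {e g h u v w : ℝ}

lemma odds_pos (hg : g ∈ Ioo (0 : ℝ) 1) : 0 < odds g :=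
  div_pos hg.1 (sub_pos.2 hg.2)

lemma odds_injOn : InjOn odds (Ioo (0 : ℝ) 1) := by
  intro x hx y hy hxy
  rw [odds, odds, div_eq_div_iff (sub_pos.2 hx.2).ne' (sub_pos.2 hy.2).ne'] at hxy
  linarith

lemma div_add_mem_Ioo {A B : ℝ} (hA : 0 < A) (hB : 0 < B) : A / (A + B) ∈ Ioo (0 : ℝ) 1 :=
  ⟨by positivity, (div_lt_one (by positivity)).2 (by linarith)⟩

lemma odds_div_add {A B : ℝ} (hA : 0 < A) (hB : 0 < B) : odds (A / (A + B)) = A / B := by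
  have hAB : A + B ≠ 0 := by positivity
  rw [odds, one_sub_div hAB, add_sub_cancel_left, div_div_div_cancel_right₀ hAB]

lemma copula_terms_pos (hg : g ∈ Ioo (0 : ℝ) 1) (hh : h ∈ Ioo (0 : ℝ) 1)
    (hu : u ∈ Ioo (0 : ℝ) 1) : 0 < g * (1 - h) * u ∧ 0 < (1 - g) * h * (1 - u) := by
  have := sub_pos.2 hg.2
  have := sub_pos.2 hh.2
  have := sub_pos.2 hu.2
  have := hg.1
  have := hh.1
  have := hu.1
  constructor <;> positivity

lemma copula_mem_Ioo (hg : g ∈ Ioo (0 : ℝ) 1) (hh : h ∈ Ioo (0 : ℝ) 1)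
    (hu : u ∈ Ioo (0 : ℝ) 1) : copula g h u ∈ Ioo (0 : ℝ) 1 :=
  div_add_mem_Ioo (copula_terms_pos hg hh hu).1 (copula_terms_pos hg hh hu).2

lemma odds_copula (hg : g ∈ Ioo (0 : ℝ) 1) (hh : h ∈ Ioo (0 : ℝ) 1)
    (hu : u ∈ Ioo (0 : ℝ) 1) : odds (copula g h u) = odds g / odds h * odds u := by
  obtain ⟨hA, hB⟩ := copula_terms_pos hg hh hu
  have := sub_pos.2 hg.2
  have := sub_pos.2 hh.2
  have := sub_pos.2 hu.2
  have := hh.1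
  rw [copula, odds_div_add hA hB, odds, odds, odds]
  field_simp

lemma copula_copula_left (hg : g ∈ Ioo (0 : ℝ) 1) (hh : h ∈ Ioo (0 : ℝ) 1)
    (hu : u ∈ Ioo (0 : ℝ) 1) (hv : v ∈ Ioo (0 : ℝ) 1) (hw : w ∈ Ioo (0 : ℝ) 1) :
    copula (copula g h u) v w = copula g (copula h u v) w := by
  have huv := copula_mem_Ioo hh hu hv
  refine odds_injOn (copula_mem_Ioo (copula_mem_Ioo hg hh hu) hv hw)
    (copula_mem_Ioo hg huv hw) ?_
  rw [odds_copula (copula_mem_Ioo hg hh hu) hv hw, odds_copula hg huv hw,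
    odds_copula hg hh hu, odds_copula hh hu hv]
  simp only [div_eq_mul_inv, mul_inv, inv_inv]
  ring

lemma copula_copula_right (hg : g ∈ Ioo (0 : ℝ) 1) (hh : h ∈ Ioo (0 : ℝ) 1)
    (hu : u ∈ Ioo (0 : ℝ) 1) (hv : v ∈ Ioo (0 : ℝ) 1) (hw : w ∈ Ioo (0 : ℝ) 1) :
    copula g (copula h u v) w = copula g h (copula u v w) := by
  have huv := copula_mem_Ioo hh hu hv
  have hvw := copula_mem_Ioo hu hv hw
  refine odds_injOn (copula_mem_Ioo hg huv hw) (copula_mem_Ioo hg hh hvw) ?_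
  rw [odds_copula hg huv hw, odds_copula hg hh hvw, odds_copula hh hu hv,
    odds_copula hu hv hw]
  simp only [div_eq_mul_inv, mul_inv, inv_inv]
  ring

lemma copula_self (hg : g ∈ Ioo (0 : ℝ) 1) : copula g g g = g := by
  refine odds_injOn (copula_mem_Ioo hg hg hg) hg ?_
  rw [odds_copula hg hg hg, div_self (odds_pos hg).ne', one_mul]

lemma copula_copula_middle (he : e ∈ Ioo (0 : ℝ) 1) (hg : g ∈ Ioo (0 : ℝ) 1) :
    copula e (copula e g e) e = g := by
  have hφ := copula_mem_Ioo he hg he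
  refine odds_injOn (copula_mem_Ioo he hφ he) hg ?_
  rw [odds_copula he hφ he, odds_copula he hg he]
  have := (odds_pos he).ne'
  have := (odds_pos hg).ne'
  field_simp

end Copula

open Copula in
/-- The ternary copula operation
`μ₃[g,h,u] = g(1-h)u / (g(1-h)u + (1-g)h(1-u))` on `G = (0,1) ⊂ ℝ`
(i) maps `G³` into `G`, (ii) is totally associative, (iii) is idempotent
(`μ₃[g,g,g] = g`, so the querelement of `g` is `g`), and (iv) for any fixed
`e ∈ G` the map `φ(g) = μ₃[e,g,e]` satisfies `φ(φ(g)) = g`. -/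
theorem statement17 (f : ℝ → ℝ → ℝ → ℝ)
    (hf : ∀ g h u : ℝ,
      f g h u = g * (1 - h) * u / (g * (1 - h) * u + (1 - g) * h * (1 - u))) :
    (∀ g h u : ℝ, g ∈ Set.Ioo (0 : ℝ) 1 → h ∈ Set.Ioo (0 : ℝ) 1 →
      u ∈ Set.Ioo (0 : ℝ) 1 → f g h u ∈ Set.Ioo (0 : ℝ) 1) ∧
    (∀ g h u v w : ℝ, g ∈ Set.Ioo (0 : ℝ) 1 → h ∈ Set.Ioo (0 : ℝ) 1 →
      u ∈ Set.Ioo (0 : ℝ) 1 → v ∈ Set.Ioo (0 : ℝ) 1 → w ∈ Set.Ioo (0 : ℝ) 1 →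
      f (f g h u) v w = f g (f h u v) w ∧ f g (f h u v) w = f g h (f u v w)) ∧
    (∀ g : ℝ, g ∈ Set.Ioo (0 : ℝ) 1 → f g g g = g) ∧
    (∀ e g : ℝ, e ∈ Set.Ioo (0 : ℝ) 1 → g ∈ Set.Ioo (0 : ℝ) 1 →
      f e (f e g e) e = g) := by
  obtain rfl : f = copula := funext fun g => funext fun h => funext fun u => hf g h u
  exact ⟨fun _ _ _ => copula_mem_Ioo,
    fun _ _ _ _ _ hg hh hu hv hw =>
      ⟨copula_copula_left hg hh hu hv hw, copula_copula_right hg hh hu hv hw⟩,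
    fun _ => copula_self, fun _ _ => copula_copula_middle⟩
end

section
/- Let ħ > 0 and e > 0 be real numbers, and consider the ternary operation μ₃[g,t,u] := (g^ħ + t^ħ + u^ħ − 3)^{1/ħ} defined for positive reals whenever the expression in brackets is positive. Define the binary product g ∗ t := (g^ħ − e^ħ + t^ħ)^{1/ħ}. Then (assuming all bracketed expressions arising below are positive): (i) with b := (3e^ħ − 3)^{1/ħ}, the Hosszú–Gluskin chain formula holds: ((g ∗ t) ∗ u) ∗ b = μ₃[g,t,u]; and (ii) with φ₃(g) := (g^ħ − 2e^ħ + 3)^{1/ħ}, φ₃⁴(g) = (g^ħ − 8e^ħ + 12)^{1/ħ}, and b₃ := (13e^ħ − 18)^{1/ħ}, the q-deformed chain formula for q = 3 holds: ((g ∗ φ₃(t)) ∗ φ₃⁴(u)) ∗ b₃ = μ₃[g,t,u]. -/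
open Real

private lemma pw {ℏ A : ℝ} (hℏ : 0 < ℏ) (hA : 0 < A) : (A ^ (1 / ℏ)) ^ ℏ = A := by
  rw [← Real.rpow_mul hA.le, one_div, inv_mul_cancel₀ hℏ.ne', Real.rpow_one]

/-- For the nonextensive ternary q-product
`μ₃[g,t,u] = (g^ℏ + t^ℏ + u^ℏ − 3)^{1/ℏ}` on positive reals and the binary
product `g ∗ t := (g^ℏ − e^ℏ + t^ℏ)^{1/ℏ}` (assuming all bracketed expressions
arising are positive): (i) with `b = (3e^ℏ − 3)^{1/ℏ}` the Hosszú–Gluskin chain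
formula `((g ∗ t) ∗ u) ∗ b = μ₃[g,t,u]` holds; (ii) with
`φ₃(g) = (g^ℏ − 2e^ℏ + 3)^{1/ℏ}` one has
`φ₃⁴(u) = (u^ℏ − 8e^ℏ + 12)^{1/ℏ}` and, with `b₃ = (13e^ℏ − 18)^{1/ℏ}`, the
q-deformed (`q = 3`) chain formula `((g ∗ φ₃(t)) ∗ φ₃⁴(u)) ∗ b₃ = μ₃[g,t,u]`. -/
theorem statement18 (ℏ e g t u : ℝ) (hℏ : 0 < ℏ) (he : 0 < e)
    (hg : 0 < g) (ht : 0 < t) (hu : 0 < u)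
    (μ : ℝ → ℝ → ℝ → ℝ)
    (hμ : ∀ x y z : ℝ, μ x y z = (x ^ ℏ + y ^ ℏ + z ^ ℏ - 3) ^ (1 / ℏ))
    (st : ℝ → ℝ → ℝ)
    (hst : ∀ x y : ℝ, st x y = (x ^ ℏ - e ^ ℏ + y ^ ℏ) ^ (1 / ℏ))
    (φ₃ : ℝ → ℝ) (hφ₃ : ∀ x : ℝ, φ₃ x = (x ^ ℏ - 2 * e ^ ℏ + 3) ^ (1 / ℏ))
    -- positivity of all bracketed expressions arising below:
    (hμpos : 0 < g ^ ℏ + t ^ ℏ + u ^ ℏ - 3)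
    (h1 : 0 < g ^ ℏ - e ^ ℏ + t ^ ℏ)
    (h2 : 0 < g ^ ℏ - e ^ ℏ + t ^ ℏ - e ^ ℏ + u ^ ℏ)
    (hb : 0 < 3 * e ^ ℏ - 3)
    (ht1 : 0 < t ^ ℏ - 2 * e ^ ℏ + 3)
    (hu1 : 0 < u ^ ℏ - 2 * e ^ ℏ + 3)
    (hu2 : 0 < u ^ ℏ - 4 * e ^ ℏ + 6)
    (hu3 : 0 < u ^ ℏ - 6 * e ^ ℏ + 9)
    (hu4 : 0 < u ^ ℏ - 8 * e ^ ℏ + 12)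
    (hb3 : 0 < 13 * e ^ ℏ - 18)
    (hc1 : 0 < g ^ ℏ + t ^ ℏ - 3 * e ^ ℏ + 3)
    (hc2 : 0 < g ^ ℏ + t ^ ℏ + u ^ ℏ - 12 * e ^ ℏ + 15) :
    st (st (st g t) u) ((3 * e ^ ℏ - 3) ^ (1 / ℏ)) = μ g t u ∧
    φ₃^[4] u = (u ^ ℏ - 8 * e ^ ℏ + 12) ^ (1 / ℏ) ∧
    st (st (st g (φ₃ t)) (φ₃^[4] u)) ((13 * e ^ ℏ - 18) ^ (1 / ℏ)) = μ g t u := by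
  have hf4 : φ₃^[4] u = (u ^ ℏ - 8 * e ^ ℏ + 12) ^ (1 / ℏ) := by
    have e1 : φ₃ u = (u ^ ℏ - 2 * e ^ ℏ + 3) ^ (1 / ℏ) := hφ₃ u
    have e2 : φ₃ (φ₃ u) = (u ^ ℏ - 4 * e ^ ℏ + 6) ^ (1 / ℏ) := by
      rw [hφ₃, e1, pw hℏ hu1]; ring_nf
    have e3 : φ₃ (φ₃ (φ₃ u)) = (u ^ ℏ - 6 * e ^ ℏ + 9) ^ (1 / ℏ) := by
      rw [hφ₃, e2, pw hℏ hu2]; ring_nf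
    show φ₃ (φ₃ (φ₃ (φ₃ u))) = _
    rw [hφ₃, e3, pw hℏ hu3]; ring_nf
  refine ⟨?_, hf4, ?_⟩
  · rw [hst, hst, hst, hμ, pw hℏ h1, pw hℏ hb]
    have hA : (0:ℝ) < g ^ ℏ - e ^ ℏ + t ^ ℏ - e ^ ℏ + u ^ ℏ := h2
    have : g ^ ℏ - e ^ ℏ + t ^ ℏ - e ^ ℏ + u ^ ℏ = g ^ ℏ - e ^ ℏ + t ^ ℏ - e ^ ℏ + u ^ ℏ := rfl
    have hA' : (0:ℝ) < g ^ ℏ - e ^ ℏ + t ^ ℏ - e ^ ℏ + u ^ ℏ := h2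
    rw [show g ^ ℏ - e ^ ℏ + t ^ ℏ - e ^ ℏ + u ^ ℏ = g ^ ℏ - e ^ ℏ + t ^ ℏ - e ^ ℏ + u ^ ℏ from rfl]
    rw [pw hℏ (show (0:ℝ) < g ^ ℏ - e ^ ℏ + t ^ ℏ - e ^ ℏ + u ^ ℏ by linarith)]
    ring_nf
  · rw [hf4, hst, hst, hst, hφ₃, pw hℏ ht1, pw hℏ hb3]
    have hA : (0:ℝ) < g ^ ℏ - e ^ ℏ + (t ^ ℏ - 2 * e ^ ℏ + 3) := by linarith
    rw [pw hℏ hA, pw hℏ hu4, hμ,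
      show g ^ ℏ - e ^ ℏ + (t ^ ℏ - 2 * e ^ ℏ + 3) - e ^ ℏ + (u ^ ℏ - 8 * e ^ ℏ + 12)
        = g ^ ℏ + t ^ ℏ + u ^ ℏ - 12 * e ^ ℏ + 15 from by ring, pw hℏ hc2]
    ring_nf
end
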